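/- arXiv:2108.02600 — 5 statements merged into one kernel-verified Lean document; each statement's English description precedes it below -/
import Mathlib

section
/- Let κ_s, κ_p > 0. Then as r → 0+, κ_s³H₃⁽¹⁾(κ_s r) − κ_p³H₃⁽¹⁾(κ_p r) = (2i/π)(κ_p² − κ_s²)/r + (i/(4π))(κ_p⁴ − κ_s⁴) r + O(r³ log(r/2)). -/
open Complex Filter Topology Asymptotics

/-- harmonic-type sum φ(p) = Σ_{m=1}^p 1/m -/
noncomputable def phiH (p : ℕ) : ℝ := ∑ m ∈ Finset.range p, (1 : ℝ)/(m+1)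

/-- Bessel function of the first kind of integer order `n`, via its ascending series. -/
noncomputable def besselJ (n : ℕ) (r : ℝ) : ℝ :=
  ∑' p : ℕ, (-1 : ℝ)^p / ((Nat.factorial p : ℝ) * (Nat.factorial (n+p) : ℝ)) * (r/2)^(n+2*p)

/-- Bessel function of the second kind of integer order `n`, via its ascending series (z > 0). -/
noncomputable def besselY (n : ℕ) (z : ℝ) : ℝ :=
  (2/Real.pi) * (Real.log (z/2) + Real.eulerMascheroniConstant) * besselJ n z
  - (1/Real.pi) * ∑ p ∈ Finset.range n,
      ((Nat.factorial (n-1-p) : ℝ) / (Nat.factorial p : ℝ)) * (z/2)^((2*(p:ℤ)) - (n:ℤ))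
  - (1/Real.pi) * ∑' p : ℕ, (-1:ℝ)^p * (phiH p + phiH (p+n))
      / ((Nat.factorial p : ℝ) * (Nat.factorial (p+n) : ℝ)) * (z/2)^(2*p+n)

/-- Hankel function of the first kind of integer order `n`. -/
noncomputable def besselH (n : ℕ) (z : ℝ) : ℂ := (besselJ n z : ℂ) + Complex.I * (besselY n z : ℂ)

/-- regular tail series appearing in Y₃ -/
noncomputable def Ttail (z : ℝ) : ℝ :=
  ∑' p : ℕ, (-1:ℝ)^p * (phiH p + phiH (p+3))
      / ((Nat.factorial p : ℝ) * (Nat.factorial (p+3) : ℝ)) * (z/2)^(2*p+3)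

lemma sum3_eq (z : ℝ) (hz : 0 < z) :
    ∑ p ∈ Finset.range 3,
      ((Nat.factorial (3-1-p) : ℝ) / (Nat.factorial p : ℝ)) * (z/2)^((2*(p:ℤ)) - ((3:ℕ):ℤ))
    = 16/z^3 + 2/z + z/4 := by
  have h2 : (z/2) ≠ 0 := by positivity
  rw [Finset.sum_range_succ, Finset.sum_range_succ, Finset.sum_range_succ,
    Finset.sum_range_zero]
  norm_num [Nat.factorial, zpow_sub₀ h2, zpow_ofNat]
  field_simp
  ring

lemma besselY3_eq (z : ℝ) (hz : 0 < z) :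
    besselY 3 z = (2/Real.pi) * (Real.log (z/2) + Real.eulerMascheroniConstant) * besselJ 3 z
      - (1/Real.pi) * (16/z^3 + 2/z + z/4) - (1/Real.pi) * Ttail z := by
  rw [besselY, sum3_eq z hz]; rfl

lemma abs_tsum_le_of_le {f g : ℕ → ℝ} (h : ∀ p, |f p| ≤ g p) (hg : Summable g) :
    |∑' p, f p| ≤ ∑' p, g p := by
  have habs : Summable (fun p => |f p|) :=
    hg.of_nonneg_of_le (fun p => abs_nonneg _) h
  calc |∑' p, f p| = ‖∑' p, f p‖ := (Real.norm_eq_abs _).symm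
    _ ≤ ∑' p, ‖f p‖ := norm_tsum_le_tsum_norm (by simpa [Real.norm_eq_abs] using habs)
    _ ≤ ∑' p, g p := Summable.tsum_le_tsum (fun p => by simpa [Real.norm_eq_abs] using h p)
        (by simpa [Real.norm_eq_abs] using habs) hg

lemma phiH_nonneg (p : ℕ) : 0 ≤ phiH p :=
  Finset.sum_nonneg fun m _ => by positivity

lemma phiH_le (p : ℕ) : phiH p ≤ p := by
  calc phiH p ≤ ∑ _m ∈ Finset.range p, (1:ℝ) := by
        apply Finset.sum_le_sum
        intro m _
        rw [div_le_one (by positivity)]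
        have : (0:ℝ) ≤ (m:ℝ) := Nat.cast_nonneg m
        linarith
    _ = p := by simp

lemma fact_ge_one (p n : ℕ) : (1:ℝ) ≤ (Nat.factorial p : ℝ) * (Nat.factorial n : ℝ) := by
  have h1 : (1:ℝ) ≤ (Nat.factorial p : ℝ) := by
    exact_mod_cast Nat.one_le_iff_ne_zero.mpr (Nat.factorial_ne_zero p)
  have h2 : (1:ℝ) ≤ (Nat.factorial n : ℝ) := by
    exact_mod_cast Nat.one_le_iff_ne_zero.mpr (Nat.factorial_ne_zero n)
  nlinarith

lemma pow_term_le (z : ℝ) (p : ℕ) (h0 : 0 ≤ z) (h1 : z ≤ 1) :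
    (z/2)^(2*p+3) ≤ (z/2)^3 * (1/4)^p := by
  have hz2 : (0:ℝ) ≤ z/2 := by positivity
  have heq : (z/2)^(2*p+3) = (z/2)^3 * ((z/2)^2)^p := by
    rw [← pow_mul, ← pow_add]; congr 1; omega
  rw [heq]
  have : ((z/2)^2)^p ≤ (1/4:ℝ)^p := by
    apply pow_le_pow_left₀ (by positivity)
    nlinarith
  nlinarith [pow_nonneg hz2 3, pow_nonneg (by positivity : (0:ℝ) ≤ (z/2)^2) p]

lemma abs_besselJ3_le (z : ℝ) (h0 : 0 ≤ z) (h1 : z ≤ 1) : |besselJ 3 z| ≤ z^3 := by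
  have hg : Summable (fun p : ℕ => (z/2)^3 * (1/4:ℝ)^p) :=
    (summable_geometric_of_lt_one (by norm_num) (by norm_num)).mul_left _
  have hb : |besselJ 3 z| ≤ ∑' p : ℕ, (z/2)^3 * (1/4:ℝ)^p := by
    apply abs_tsum_le_of_le _ hg
    intro p
    have hfac := fact_ge_one p (3+p)
    have hterm : (0:ℝ) ≤ (z/2)^(3+2*p) := by positivity
    have : |(-1 : ℝ)^p / ((Nat.factorial p : ℝ) * (Nat.factorial (3+p) : ℝ)) * (z/2)^(3+2*p)|
        = (1 / ((Nat.factorial p : ℝ) * (Nat.factorial (3+p) : ℝ))) * (z/2)^(3+2*p) := by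
      rw [abs_mul, abs_div, _root_.abs_pow, abs_neg, abs_one, one_pow,
        _root_.abs_of_nonneg hterm, _root_.abs_of_nonneg (by positivity)]
    rw [this]
    calc (1 / ((Nat.factorial p : ℝ) * (Nat.factorial (3+p) : ℝ))) * (z/2)^(3+2*p)
        ≤ 1 * (z/2)^(3+2*p) := by
          apply mul_le_mul_of_nonneg_right _ hterm
          rw [div_le_one (by linarith)]; exact hfac
      _ = (z/2)^(2*p+3) := by rw [one_mul]; congr 1; omega
      _ ≤ (z/2)^3 * (1/4)^p := pow_term_le z p h0 h1
  have hsum : ∑' p : ℕ, (z/2)^3 * (1/4:ℝ)^p = (z/2)^3 * (4/3) := by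
    rw [tsum_mul_left, tsum_geometric_of_lt_one (by norm_num) (by norm_num)]
    norm_num
  rw [hsum] at hb
  nlinarith [pow_nonneg h0 3]

lemma two_p_three_le (p : ℕ) : (2*(p:ℝ)+3) ≤ 3*2^p := by
  induction p with
  | zero => norm_num
  | succ n ih =>
      have h1 : (1:ℝ) ≤ 2^n := one_le_pow₀ (by norm_num : (1:ℝ) ≤ 2)
      push_cast
      push_cast at ih
      rw [pow_succ]
      nlinarith

lemma abs_Ttail_le (z : ℝ) (h0 : 0 ≤ z) (h1 : z ≤ 1) : |Ttail z| ≤ z^3 := by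
  have hg : Summable (fun p : ℕ => 3*(z/2)^3 * (1/2:ℝ)^p) :=
    (summable_geometric_of_lt_one (by norm_num) (by norm_num)).mul_left _
  have hb : |Ttail z| ≤ ∑' p : ℕ, 3*(z/2)^3 * (1/2:ℝ)^p := by
    apply abs_tsum_le_of_le _ hg
    intro p
    have hfac := fact_ge_one p (p+3)
    have hterm : (0:ℝ) ≤ (z/2)^(2*p+3) := by positivity
    have hphi : (0:ℝ) ≤ phiH p + phiH (p+3) := by
      have := phiH_nonneg p; have := phiH_nonneg (p+3); linarith
    have habs : |(-1:ℝ)^p * (phiH p + phiH (p+3))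
        / ((Nat.factorial p : ℝ) * (Nat.factorial (p+3) : ℝ)) * (z/2)^(2*p+3)|
        = (phiH p + phiH (p+3)) / ((Nat.factorial p : ℝ) * (Nat.factorial (p+3) : ℝ))
          * (z/2)^(2*p+3) := by
      rw [abs_mul, abs_div, abs_mul, _root_.abs_pow, abs_neg, abs_one, one_pow, one_mul,
        _root_.abs_of_nonneg hterm, _root_.abs_of_nonneg hphi, _root_.abs_of_nonneg (by positivity)]
    rw [habs]
    have hphile : phiH p + phiH (p+3) ≤ 2*(p:ℝ)+3 := by
      have h1 := phiH_le p
      have h2 := phiH_le (p+3)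
      push_cast at h2
      linarith
    calc (phiH p + phiH (p+3)) / ((Nat.factorial p : ℝ) * (Nat.factorial (p+3) : ℝ))
          * (z/2)^(2*p+3)
        ≤ (phiH p + phiH (p+3)) * (z/2)^(2*p+3) := by
          apply mul_le_mul_of_nonneg_right _ hterm
          exact div_le_self hphi hfac
      _ ≤ (2*(p:ℝ)+3) * (z/2)^(2*p+3) := mul_le_mul_of_nonneg_right hphile hterm
      _ ≤ (3*2^p) * ((z/2)^3 * (1/4)^p) := by
          apply mul_le_mul (two_p_three_le p) (pow_term_le z p h0 h1) hterm
          positivity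
      _ = 3*(z/2)^3 * (1/2:ℝ)^p := by
          have hx : ((1:ℝ)/4)^p * (2:ℝ)^p = (1/2:ℝ)^p := by
            rw [← mul_pow]; norm_num
          calc (3*2^p) * ((z/2)^3 * ((1:ℝ)/4)^p)
              = 3*(z/2)^3 * (((1:ℝ)/4)^p * 2^p) := by ring
            _ = 3*(z/2)^3 * (1/2:ℝ)^p := by rw [hx]
  have hsum : ∑' p : ℕ, 3*(z/2)^3 * (1/2:ℝ)^p = 3*(z/2)^3 * 2 := by
    rw [tsum_mul_left, tsum_geometric_of_lt_one (by norm_num) (by norm_num)]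
    norm_num
  rw [hsum] at hb
  nlinarith [pow_nonneg h0 3]

lemma Y3_scaled (k r : ℝ) (hk : 0 < k) (hr : 0 < r) :
    k^3 * besselY 3 (k*r)
      = (2/Real.pi)*((Real.log (k*r/2)+Real.eulerMascheroniConstant)*(k^3*besselJ 3 (k*r)))
      - (1/Real.pi)*(16/r^3 + 2*k^2/r + k^4*r/4) - (1/Real.pi)*(k^3*Ttail (k*r)) := by
  have hπ := Real.pi_ne_zero
  rw [besselY3_eq _ (by positivity)]
  field_simp

lemma abs_sub' (a b : ℝ) : |a - b| ≤ |a| + |b| := by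
  rw [sub_eq_add_neg]
  exact (abs_add_le _ _).trans (by rw [abs_neg])

set_option maxHeartbeats 2000000 in
/-- asymptotics of κ_s³H₃⁽¹⁾(κ_s r) − κ_p³H₃⁽¹⁾(κ_p r) as r → 0⁺. -/
theorem hankel3_difference_asymp (ks kp : ℝ) (hs : 0 < ks) (hp : 0 < kp) :
    (fun r : ℝ => (ks:ℂ)^3 * besselH 3 (ks*r) - (kp:ℂ)^3 * besselH 3 (kp*r)
        - (2*Complex.I/(Real.pi : ℂ)) * ((kp:ℂ)^2 - (ks:ℂ)^2) / (r:ℂ)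
        - (Complex.I/(4*(Real.pi : ℂ))) * ((kp:ℂ)^4 - (ks:ℂ)^4) * (r:ℂ))
      =O[𝓝[>] (0:ℝ)] (fun r : ℝ => r^3 * Real.log (r/2)) := by
  have hπ : (0:ℝ) < Real.pi := Real.pi_pos
  set γ := Real.eulerMascheroniConstant with hγdef
  set δ : ℝ := min (min (1/ks) (1/kp)) (2*Real.exp (-1)) with hδdef
  have hδ : 0 < δ := by positivity
  set Cs : ℝ := 1 + |Real.log ks| + |γ| with hCs
  set Cp : ℝ := 1 + |Real.log kp| + |γ| with hCp
  set C : ℝ := (1+1/Real.pi)*(ks^6+kp^6) + (2/Real.pi)*(Cs*ks^6 + Cp*kp^6) with hCdef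
  rw [isBigO_iff]
  refine ⟨C, ?_⟩
  filter_upwards [Ioo_mem_nhdsGT_of_mem (Set.mem_Ico.mpr ⟨le_refl (0:ℝ), hδ⟩)] with r hrIoo
  obtain ⟨hr0, hrδ⟩ := hrIoo
  -- smallness facts
  have hks1 : ks*r ≤ 1 := by
    have h1 : r < 1/ks := lt_of_lt_of_le hrδ ((min_le_left _ _).trans (min_le_left _ _))
    have := (lt_div_iff₀ hs).mp (by linarith : r < 1/ks)
    linarith [mul_comm ks r]
  have hkp1 : kp*r ≤ 1 := by
    have h1 : r < 1/kp := lt_of_lt_of_le hrδ ((min_le_left _ _).trans (min_le_right _ _))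
    have := (lt_div_iff₀ hp).mp (by linarith : r < 1/kp)
    linarith [mul_comm kp r]
  have hlog : Real.log (r/2) < -1 := by
    have h2 : r/2 < Real.exp (-1) := by
      have := lt_of_lt_of_le hrδ (min_le_right _ _)
      linarith
    calc Real.log (r/2) < Real.log (Real.exp (-1)) := Real.log_lt_log (by positivity) h2
      _ = -1 := Real.log_exp _
  set L : ℝ := -Real.log (r/2) with hLdef
  have hL1 : 1 ≤ L := by rw [hLdef]; linarith
  have habsL : |Real.log (r/2)| = L := by rw [hLdef]; exact abs_of_neg (by linarith)
  -- key identity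
  have e1 : ∀ k : ℝ, 0 < k → (k:ℂ)^3 * besselH 3 (k*r)
      = ((k^3 * besselJ 3 (k*r) : ℝ):ℂ) + Complex.I * ((k^3 * besselY 3 (k*r) : ℝ):ℂ) := by
    intro k hk; rw [besselH]; push_cast; ring
  set A : ℝ := ks^3*besselJ 3 (ks*r) - kp^3*besselJ 3 (kp*r) with hAdef
  set B : ℝ := (2/Real.pi)*((Real.log (ks*r/2)+γ)*(ks^3*besselJ 3 (ks*r))
      - (Real.log (kp*r/2)+γ)*(kp^3*besselJ 3 (kp*r))) with hBdef
  set D : ℝ := (1/Real.pi)*(ks^3*Ttail (ks*r) - kp^3*Ttail (kp*r)) with hDdef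
  have hkey : (ks:ℂ)^3 * besselH 3 (ks*r) - (kp:ℂ)^3 * besselH 3 (kp*r)
        - (2*Complex.I/(Real.pi : ℂ)) * ((kp:ℂ)^2 - (ks:ℂ)^2) / (r:ℂ)
        - (Complex.I/(4*(Real.pi : ℂ))) * ((kp:ℂ)^4 - (ks:ℂ)^4) * (r:ℂ)
      = (A:ℂ) + Complex.I * (B:ℂ) - Complex.I * (D:ℂ) := by
    rw [e1 ks hs, e1 kp hp, Y3_scaled ks r hs hr0, Y3_scaled kp r hp hr0,
      hAdef, hBdef, hDdef]
    push_cast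
    ring
  rw [hkey]
  -- norm bound
  have hnorm : ‖(A:ℂ) + Complex.I * (B:ℂ) - Complex.I * (D:ℂ)‖ ≤ |A| + |B| + |D| := by
    calc ‖(A:ℂ) + Complex.I * (B:ℂ) - Complex.I * (D:ℂ)‖
        ≤ ‖(A:ℂ) + Complex.I * (B:ℂ)‖ + ‖Complex.I * (D:ℂ)‖ := norm_sub_le _ _
      _ ≤ ‖(A:ℂ)‖ + ‖Complex.I * (B:ℂ)‖ + ‖Complex.I * (D:ℂ)‖ := by
          linarith [norm_add_le (A:ℂ) (Complex.I * (B:ℂ))]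
      _ = |A| + |B| + |D| := by
          simp [norm_mul, Complex.norm_real, Real.norm_eq_abs]
  -- component bounds
  have hr3 : (0:ℝ) < r^3 := by positivity
  have hJs : |besselJ 3 (ks*r)| ≤ ks^3*r^3 := by
    have := abs_besselJ3_le (ks*r) (by positivity) hks1
    calc |besselJ 3 (ks*r)| ≤ (ks*r)^3 := this
      _ = ks^3*r^3 := by ring
  have hJp : |besselJ 3 (kp*r)| ≤ kp^3*r^3 := by
    have := abs_besselJ3_le (kp*r) (by positivity) hkp1
    calc |besselJ 3 (kp*r)| ≤ (kp*r)^3 := this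
      _ = kp^3*r^3 := by ring
  have hTs : |Ttail (ks*r)| ≤ ks^3*r^3 := by
    have := abs_Ttail_le (ks*r) (by positivity) hks1
    calc |Ttail (ks*r)| ≤ (ks*r)^3 := this
      _ = ks^3*r^3 := by ring
  have hTp : |Ttail (kp*r)| ≤ kp^3*r^3 := by
    have := abs_Ttail_le (kp*r) (by positivity) hkp1
    calc |Ttail (kp*r)| ≤ (kp*r)^3 := this
      _ = kp^3*r^3 := by ring
  have hks3 : (0:ℝ) < ks^3 := by positivity
  have hkp3 : (0:ℝ) < kp^3 := by positivity
  have hA : |A| ≤ (ks^6+kp^6)*r^3 := by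
    rw [hAdef]
    calc |ks^3*besselJ 3 (ks*r) - kp^3*besselJ 3 (kp*r)|
        ≤ |ks^3*besselJ 3 (ks*r)| + |kp^3*besselJ 3 (kp*r)| := abs_sub' _ _
      _ = ks^3*|besselJ 3 (ks*r)| + kp^3*|besselJ 3 (kp*r)| := by
          rw [abs_mul, abs_mul, _root_.abs_of_pos hks3, _root_.abs_of_pos hkp3]
      _ ≤ ks^3*(ks^3*r^3) + kp^3*(kp^3*r^3) := by
          have := mul_le_mul_of_nonneg_left hJs hks3.le
          have := mul_le_mul_of_nonneg_left hJp hkp3.le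
          linarith
      _ = (ks^6+kp^6)*r^3 := by ring
  have hD : |D| ≤ (1/Real.pi)*(ks^6+kp^6)*r^3 := by
    rw [hDdef, abs_mul, _root_.abs_of_pos (by positivity : (0:ℝ) < 1/Real.pi)]
    have : |ks^3*Ttail (ks*r) - kp^3*Ttail (kp*r)| ≤ (ks^6+kp^6)*r^3 := by
      calc |ks^3*Ttail (ks*r) - kp^3*Ttail (kp*r)|
          ≤ |ks^3*Ttail (ks*r)| + |kp^3*Ttail (kp*r)| := abs_sub' _ _
        _ = ks^3*|Ttail (ks*r)| + kp^3*|Ttail (kp*r)| := by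
            rw [abs_mul, abs_mul, _root_.abs_of_pos hks3, _root_.abs_of_pos hkp3]
        _ ≤ ks^3*(ks^3*r^3) + kp^3*(kp^3*r^3) := by
            have := mul_le_mul_of_nonneg_left hTs hks3.le
            have := mul_le_mul_of_nonneg_left hTp hkp3.le
            linarith
        _ = (ks^6+kp^6)*r^3 := by ring
    calc (1/Real.pi) * |ks^3*Ttail (ks*r) - kp^3*Ttail (kp*r)|
        ≤ (1/Real.pi) * ((ks^6+kp^6)*r^3) :=
          mul_le_mul_of_nonneg_left this (by positivity)
      _ = (1/Real.pi)*(ks^6+kp^6)*r^3 := by ring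
  -- log bounds
  have hlogterm : ∀ k : ℝ, 0 < k → k*r ≤ 1 →
      |(Real.log (k*r/2)+γ)*(k^3*besselJ 3 (k*r))|
        ≤ (1+|Real.log k|+|γ|)*k^6*(r^3*L) := by
    intro k hk hk1
    have hk3 : (0:ℝ) < k^3 := by positivity
    have hJ : |besselJ 3 (k*r)| ≤ k^3*r^3 := by
      have := abs_besselJ3_le (k*r) (by positivity) hk1
      calc |besselJ 3 (k*r)| ≤ (k*r)^3 := this
        _ = k^3*r^3 := by ring
    have hlg : |Real.log (k*r/2)| ≤ |Real.log k| + L := by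
      rw [show k*r/2 = k*(r/2) by ring, Real.log_mul hk.ne' (by positivity)]
      calc |Real.log k + Real.log (r/2)| ≤ |Real.log k| + |Real.log (r/2)| := abs_add_le _ _
        _ = |Real.log k| + L := by rw [habsL]
    have h1 : |Real.log (k*r/2)+γ| ≤ |Real.log k| + L + |γ| := by
      calc |Real.log (k*r/2)+γ| ≤ |Real.log (k*r/2)| + |γ| := abs_add_le _ _
        _ ≤ |Real.log k| + L + |γ| := by linarith
    have h2 : |Real.log k| + L + |γ| ≤ (1+|Real.log k|+|γ|)*L := by
      have hlk : (0:ℝ) ≤ |Real.log k| := abs_nonneg _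
      have hg : (0:ℝ) ≤ |γ| := abs_nonneg _
      nlinarith
    calc |(Real.log (k*r/2)+γ)*(k^3*besselJ 3 (k*r))|
        = |Real.log (k*r/2)+γ| * |k^3*besselJ 3 (k*r)| := abs_mul _ _
      _ ≤ ((1+|Real.log k|+|γ|)*L) * (k^3*(k^3*r^3)) := by
          apply mul_le_mul (h1.trans h2) _ (abs_nonneg _) (by positivity)
          rw [abs_mul, _root_.abs_of_pos hk3]
          exact mul_le_mul_of_nonneg_left hJ hk3.le
      _ = (1+|Real.log k|+|γ|)*k^6*(r^3*L) := by ring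
  have hB : |B| ≤ (2/Real.pi)*(Cs*ks^6 + Cp*kp^6)*(r^3*L) := by
    rw [hBdef, abs_mul, _root_.abs_of_pos (by positivity : (0:ℝ) < 2/Real.pi)]
    have hsub : |(Real.log (ks*r/2)+γ)*(ks^3*besselJ 3 (ks*r))
        - (Real.log (kp*r/2)+γ)*(kp^3*besselJ 3 (kp*r))|
        ≤ (Cs*ks^6 + Cp*kp^6)*(r^3*L) := by
      calc |(Real.log (ks*r/2)+γ)*(ks^3*besselJ 3 (ks*r))
          - (Real.log (kp*r/2)+γ)*(kp^3*besselJ 3 (kp*r))|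
          ≤ |(Real.log (ks*r/2)+γ)*(ks^3*besselJ 3 (ks*r))|
            + |(Real.log (kp*r/2)+γ)*(kp^3*besselJ 3 (kp*r))| := abs_sub' _ _
        _ ≤ (1+|Real.log ks|+|γ|)*ks^6*(r^3*L) + (1+|Real.log kp|+|γ|)*kp^6*(r^3*L) := by
            linarith [hlogterm ks hs hks1, hlogterm kp hp hkp1]
        _ = (Cs*ks^6 + Cp*kp^6)*(r^3*L) := by rw [hCs, hCp]; ring
    calc (2/Real.pi) * |(Real.log (ks*r/2)+γ)*(ks^3*besselJ 3 (ks*r))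
          - (Real.log (kp*r/2)+γ)*(kp^3*besselJ 3 (kp*r))|
        ≤ (2/Real.pi) * ((Cs*ks^6 + Cp*kp^6)*(r^3*L)) :=
          mul_le_mul_of_nonneg_left hsub (by positivity)
      _ = (2/Real.pi)*(Cs*ks^6 + Cp*kp^6)*(r^3*L) := by ring
  -- RHS norm
  have hRHS : ‖r^3 * Real.log (r/2)‖ = r^3*L := by
    rw [Real.norm_eq_abs, abs_mul, _root_.abs_of_pos hr3, habsL]
  rw [hRHS]
  have hr3L : r^3 ≤ r^3*L := by nlinarith
  have hr3Lpos : (0:ℝ) < r^3*L := by nlinarith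
  have hsum6 : (0:ℝ) ≤ ks^6+kp^6 := by positivity
  calc ‖(A:ℂ) + Complex.I * (B:ℂ) - Complex.I * (D:ℂ)‖ ≤ |A| + |B| + |D| := hnorm
    _ ≤ (ks^6+kp^6)*(r^3*L) + (2/Real.pi)*(Cs*ks^6 + Cp*kp^6)*(r^3*L)
        + (1/Real.pi)*(ks^6+kp^6)*(r^3*L) := by
        have h1 : (ks^6+kp^6)*r^3 ≤ (ks^6+kp^6)*(r^3*L) :=
          mul_le_mul_of_nonneg_left hr3L hsum6
        have h2 : (1/Real.pi)*(ks^6+kp^6)*r^3 ≤ (1/Real.pi)*(ks^6+kp^6)*(r^3*L) := by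
          apply mul_le_mul_of_nonneg_left hr3L
          positivity
        exact add_le_add (add_le_add (hA.trans h1) hB) (hD.trans h2)
    _ = C * (r^3*L) := by rw [hCdef]; ring
end

section
/- Fix κ > 0 and a function f ∈ BC¹(ℝ) (bounded with bounded continuous derivative). Define r(s,t) = √((s−t)² + (f(s)−f(t))²) and ρ₀(s,t) = H₀⁽¹⁾(κ r(s,t)) − (2i/π) J₀(κ r(s,t)) ln|s−t| for s ≠ t. Then ρ₀ extends to a bounded continuous function on ℝ², with diagonal value ρ₀(s,s) = (1 + (2i/π)C_E) + (2i/π) ln((κ/2)√(1+f'(s)²)). -/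
open Filter Topology Asymptotics

namespace Rho0Aux

noncomputable def F (c : ℕ → ℝ) (x : ℝ) : ℝ := ∑' p : ℕ, c p * x ^ (2*p)

noncomputable def Dc (c : ℕ → ℝ) (p : ℕ) : ℝ := c (p+1) * (2*(p+1))

/-- class of coefficient sequences we work with -/
def Good (A : ℝ) (c : ℕ → ℝ) : Prop := ∀ p, |c p| ≤ A / (p.factorial : ℝ)

lemma Good.Dc {A c} (h : Good A c) : Good (2*A) (Rho0Aux.Dc c) := by
  intro p
  have h1 := h (p+1)
  have hfp : ((p+1).factorial : ℝ) = (p+1) * p.factorial := by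
    push_cast [Nat.factorial_succ]; ring
  have hp0 : (0:ℝ) < p.factorial := by positivity
  have hp1 : (0:ℝ) < (p:ℝ)+1 := by positivity
  rw [Rho0Aux.Dc, abs_mul]
  have h2 : |(2:ℝ)*(p+1)| = 2*((p:ℝ)+1) := abs_of_nonneg (by positivity)
  rw [h2]
  rw [hfp] at h1
  calc |c (p+1)| * (2*((p:ℝ)+1)) ≤ A / (((p:ℝ)+1) * p.factorial) * (2*((p:ℝ)+1)) := by
        exact mul_le_mul_of_nonneg_right h1 (by positivity)
    _ = 2*A / p.factorial := by field_simp

lemma Good.nonneg {A c} (h : Good A c) : 0 ≤ A := by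
  have := h 0
  simp [Nat.factorial] at this
  exact le_trans (abs_nonneg _) this

lemma Good.abs {A c} (h : Good A c) : Good A (fun p => |c p|) := by
  intro p; simpa using h p

lemma nat_le_four_pow (p : ℕ) : (p:ℝ) ≤ 4^p := by
  calc (p:ℝ) ≤ 2^p := by exact_mod_cast (Nat.lt_two_pow_self (n := p)).le
    _ ≤ 4^p := by apply pow_le_pow_left₀ <;> norm_num

/-- master summability lemma -/
lemma summable_master {A : ℝ} {c : ℕ → ℝ} (hc : Good A c)
    (k : ℕ → ℝ) (hk : ∀ p, |k p| ≤ 16 * 4 ^ p) (x : ℝ) (e : ℕ → ℕ) (he : ∀ p, e p ≤ 2*p+2) :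
    Summable fun p => c p * k p * x ^ (e p) := by
  have hA := hc.nonneg
  set M : ℝ := max |x| 1 with hM
  have hM1 : (1:ℝ) ≤ M := le_max_right _ _
  have hM0 : (0:ℝ) ≤ M := by linarith
  apply Summable.of_norm_bounded (g := fun p => (16*A*M^2) * ((4*M^2)^p / p.factorial))
  · exact (Real.summable_pow_div_factorial (4*M^2)).mul_left _
  · intro p
    have h1 : ‖c p * k p * x ^ (e p)‖ = |c p| * |k p| * |x|^(e p) := by
      rw [Real.norm_eq_abs, abs_mul, abs_mul, abs_pow]
    rw [h1]
    have h2 : |x|^(e p) ≤ M^(2*p+2) := by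
      calc |x|^(e p) ≤ M^(e p) := pow_le_pow_left₀ (abs_nonneg x) (le_max_left _ _) _
        _ ≤ M^(2*p+2) := pow_le_pow_right₀ hM1 (he p)
    have h3 : (0:ℝ) < p.factorial := by positivity
    calc |c p| * |k p| * |x|^(e p) ≤ (A/p.factorial) * (16*4^p) * M^(2*p+2) := by
          apply mul_le_mul (mul_le_mul (hc p) (hk p) (abs_nonneg _) (by positivity)) h2
            (by positivity) (by positivity)
      _ = (16*A*M^2) * ((4*M^2)^p / p.factorial) := by
          rw [pow_add, pow_mul, mul_pow]; field_simp

lemma k_bound_two_p (p : ℕ) : |((2*p : ℕ) : ℝ)| ≤ 16 * 4 ^ p := by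
  rw [abs_of_nonneg (by positivity)]
  have := nat_le_four_pow p
  have h4 : (0:ℝ) < 4^p := by positivity
  push_cast
  nlinarith

lemma summable_F {A : ℝ} {c : ℕ → ℝ} (hc : Good A c) (x : ℝ) :
    Summable fun p => c p * x ^ (2*p) := by
  have := summable_master hc (fun _ => 1) (fun p => by
    rw [abs_one]
    have h1 : (1:ℝ) ≤ 4^p := one_le_pow₀ (by norm_num)
    linarith) x (fun p => 2*p)
    (fun p => by show 2*p ≤ 2*p+2; omega)
  simpa using this

/-- derivative of an even power series -/
lemma hasDerivAt_F {A : ℝ} {c : ℕ → ℝ} (hc : Good A c) (x : ℝ) :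
    HasDerivAt (F c) (x * F (Rho0Aux.Dc c) x) x := by
  set R : ℝ := |x| + 1 with hR
  have hR1 : (1:ℝ) ≤ R := by have := abs_nonneg x; simp only [hR]; linarith
  have hx : x ∈ Metric.ball (0:ℝ) R := by
    simp only [Metric.mem_ball, Real.dist_eq, sub_zero, hR]; linarith
  have h0 : (0:ℝ) ∈ Metric.ball (0:ℝ) R := by
    simp only [Metric.mem_ball, Real.dist_eq, sub_zero, abs_zero]; linarith
  have hsum_u : Summable (fun p => |c p| * ((2*p : ℕ) : ℝ) * R ^ (2*p)) :=
    summable_master hc.abs (fun p => ((2*p:ℕ):ℝ)) k_bound_two_p R (fun p => 2*p)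
      (fun p => by show 2*p ≤ 2*p+2; omega)
  have key : HasDerivAt (F c) (∑' p, c p * (((2*p : ℕ):ℝ) * x ^ (2*p - 1))) x := by
    apply hasDerivAt_tsum_of_isPreconnected hsum_u Metric.isOpen_ball
      (convex_ball (0:ℝ) R).isPreconnected
      (g := fun p y => c p * y ^ (2*p)) (g' := fun p y => c p * (((2*p:ℕ):ℝ) * y ^ (2*p - 1)))
      (fun p y _ => (hasDerivAt_pow (2*p) y).const_mul (c p)) ?_ h0 ?_ hx
    · intro p y hy
      have hyR : |y| ≤ R := by
        simp only [Metric.mem_ball, Real.dist_eq, sub_zero] at hy; linarith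
      rw [Real.norm_eq_abs, abs_mul, abs_mul, abs_pow,
        abs_of_nonneg (show (0:ℝ) ≤ ((2*p:ℕ):ℝ) by positivity)]
      have h2 : |y|^(2*p-1) ≤ R^(2*p) := by
        calc |y|^(2*p-1) ≤ R^(2*p-1) := pow_le_pow_left₀ (abs_nonneg y) hyR _
          _ ≤ R^(2*p) := pow_le_pow_right₀ hR1 (by omega)
      calc |c p| * (((2*p:ℕ):ℝ) * |y|^(2*p-1)) ≤ |c p| * (((2*p:ℕ):ℝ) * R^(2*p)) := by
            apply mul_le_mul_of_nonneg_left _ (abs_nonneg _)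
            exact mul_le_mul_of_nonneg_left h2 (by positivity)
        _ = |c p| * ((2*p:ℕ):ℝ) * R^(2*p) := by ring
    · exact summable_F hc 0
  convert key using 1
  have hsum1 : Summable fun p => c p * (((2*p:ℕ):ℝ) * x ^ (2*p-1)) := by
    have := summable_master hc (fun p => ((2*p:ℕ):ℝ)) k_bound_two_p x (fun p => 2*p-1)
      (fun p => by show 2*p-1 ≤ 2*p+2; omega)
    convert this using 2 with p; ring
  rw [Summable.tsum_eq_zero_add hsum1]
  simp only [Nat.mul_zero, Nat.cast_zero, pow_zero, zero_mul, mul_zero, zero_add]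
  rw [F, ← tsum_mul_left]
  apply tsum_congr
  intro p
  have h1 : 2*(p+1) - 1 = 2*p+1 := by omega
  rw [h1, Rho0Aux.Dc]
  rw [pow_succ]
  push_cast
  ring

noncomputable def Sh (d : ℕ → ℝ) : ℕ → ℝ := fun p => match p with | 0 => 0 | q+1 => d q

lemma summable_Sh {A : ℝ} {d : ℕ → ℝ} (hd : Good A d) (x : ℝ) :
    Summable fun p => Sh d p * x^(2*p) := by
  apply (summable_nat_add_iff 1).mp
  have := summable_master hd (fun _ => (1:ℝ)) (fun p => by
    rw [abs_one]
    have h1 : (1:ℝ) ≤ 4^p := one_le_pow₀ (by norm_num)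
    linarith) x (fun p => 2*p+2) (fun p => le_refl _)
  apply this.congr
  intro p
  show d p * 1 * x^(2*p+2) = Sh d (p+1) * x^(2*(p+1))
  rw [Sh]
  ring_nf

lemma F_shift {A : ℝ} {d : ℕ → ℝ} (hd : Good A d) (x : ℝ) :
    x^2 * F d x = F (Sh d) x := by
  rw [F, F, ← tsum_mul_left, Summable.tsum_eq_zero_add (summable_Sh hd x)]
  have h0 : Sh d 0 * x^(2*0) = 0 := by rw [Sh]; simp
  rw [h0, zero_add]
  apply tsum_congr
  intro p
  show x^2 * (d p * x^(2*p)) = Sh d (p+1) * x^(2*(p+1))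
  rw [Sh]
  ring

lemma series_ODE {A B : ℝ} {c b : ℕ → ℝ} (hc : Good A c) (hb : Good B b)
    (hrec : ∀ p : ℕ, c (p+1) * (2*(p:ℝ)+2)^2 + c p = 4 * (b (p+1) * (2*(p:ℝ)+2))) (x : ℝ) :
    2*F (Dc c) x + x^2 * F (Dc (Dc c)) x + F c x = 4 * F (Dc b) x := by
  rw [F_shift (hc.Dc.Dc) x]
  have s1 : Summable fun p => Sh (Dc (Dc c)) p * x^(2*p) := summable_Sh hc.Dc.Dc x
  have s2 : Summable fun p => Dc c p * x^(2*p) := summable_F hc.Dc x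
  have s3 : Summable fun p => c p * x^(2*p) := summable_F hc x
  rw [F, F, F, F, ← tsum_mul_left, ← tsum_mul_left,
    ← Summable.tsum_add (s2.mul_left 2) s1, ← Summable.tsum_add ((s2.mul_left 2).add s1) s3]
  apply tsum_congr
  intro p
  have key : 2 * Dc c p + Sh (Dc (Dc c)) p + c p = 4 * Dc b p := by
    cases p with
    | zero =>
      have h := hrec 0
      simp only [Dc, Sh]
      push_cast at h ⊢
      nlinarith [h]
    | succ q =>
      have h := hrec (q+1)
      simp only [Dc, Sh]
      push_cast at h ⊢
      nlinarith [h]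
  calc 2 * (Dc c p * x^(2*p)) + Sh (Dc (Dc c)) p * x^(2*p) + c p * x^(2*p)
      = (2 * Dc c p + Sh (Dc (Dc c)) p + c p) * x^(2*p) := by ring
    _ = (4 * Dc b p) * x^(2*p) := by rw [key]
    _ = 4 * (Dc b p * x^(2*p)) := by ring


/-! concrete coefficient sequences -/

noncomputable def aJ (p : ℕ) : ℝ := (-1)^p / ((p.factorial : ℝ)^2 * 4^p)
noncomputable def aS (p : ℕ) : ℝ := (-1)^p * (2 * phiH p) / ((p.factorial : ℝ)^2 * 4^p)

lemma phiH_nonneg (p : ℕ) : 0 ≤ phiH p := by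
  apply Finset.sum_nonneg; intro m _; positivity

lemma phiH_le (p : ℕ) : phiH p ≤ p := by
  rw [phiH]
  calc ∑ m ∈ Finset.range p, (1:ℝ)/(m+1) ≤ ∑ m ∈ Finset.range p, 1 := by
        apply Finset.sum_le_sum; intro m _
        rw [div_le_one (by positivity)]; push_cast; linarith [Nat.cast_nonneg (α := ℝ) m]
    _ = p := by simp

lemma phiH_succ (p : ℕ) : phiH (p+1) = phiH p + 1/(p+1) := by
  rw [phiH, phiH, Finset.sum_range_succ]

lemma one_le_factorial (p : ℕ) : (1:ℝ) ≤ (p.factorial : ℝ) := by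
  exact_mod_cast Nat.one_le_iff_ne_zero.mpr p.factorial_ne_zero

lemma good_aJ : Good 1 aJ := by
  intro p
  rw [aJ, abs_div, abs_pow, abs_neg, abs_one, one_pow,
    abs_of_nonneg (show (0:ℝ) ≤ (p.factorial:ℝ)^2 * 4^p by positivity),
    div_le_div_iff₀ (by positivity) (by positivity)]
  have h1 := one_le_factorial p
  have h2 : (1:ℝ) ≤ 4^p := one_le_pow₀ (by norm_num)
  nlinarith

lemma good_aS : Good 2 aS := by
  intro p
  rw [aS, abs_div, abs_mul, abs_pow, abs_neg, abs_one, one_pow, one_mul,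
    abs_of_nonneg (show (0:ℝ) ≤ (p.factorial:ℝ)^2 * 4^p by positivity),
    abs_of_nonneg (show (0:ℝ) ≤ 2 * phiH p by have := phiH_nonneg p; linarith),
    div_le_div_iff₀ (by positivity) (by positivity)]
  have h1 := one_le_factorial p
  have h2 : (p:ℝ) ≤ 4^p := nat_le_four_pow p
  have h3 : phiH p ≤ p := phiH_le p
  have h4 : 0 ≤ phiH p := phiH_nonneg p
  have key : 2 * phiH p * (p.factorial:ℝ) ≤ 2 * (4^p * p.factorial) := by
    have := mul_le_mul_of_nonneg_right (h3.trans h2) (show (0:ℝ) ≤ (p.factorial:ℝ) by linarith)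
    linarith
  have key2 : (4:ℝ)^p * p.factorial ≤ 4^p * ((p.factorial:ℝ) * p.factorial) := by
    have := mul_le_mul_of_nonneg_left h1 (show (0:ℝ) ≤ 4^p * (p.factorial:ℝ) by positivity)
    nlinarith
  nlinarith

lemma rec_aJ (p : ℕ) : aJ (p+1) * (2*(p:ℝ)+2)^2 + aJ p = 4 * ((0:ℝ) * (2*(p:ℝ)+2)) := by
  rw [aJ, aJ]
  have hfp : (((p+1).factorial : ℝ)) = ((p:ℝ)+1) * p.factorial := by
    push_cast [Nat.factorial_succ]; ring
  rw [hfp]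
  have h1 : (p.factorial : ℝ) ≠ 0 := by positivity
  have h2 : ((p:ℝ)+1) ≠ 0 := by positivity
  have h3 : (4:ℝ)^p ≠ 0 := by positivity
  rw [pow_succ, pow_succ]
  field_simp
  ring

lemma rec_aS (p : ℕ) : aS (p+1) * (2*(p:ℝ)+2)^2 + aS p = 4 * (aJ (p+1) * (2*(p:ℝ)+2)) := by
  rw [aS, aS, aJ, phiH_succ]
  have hfp : (((p+1).factorial : ℝ)) = ((p:ℝ)+1) * p.factorial := by
    push_cast [Nat.factorial_succ]; ring
  rw [hfp]
  have h1 : (p.factorial : ℝ) ≠ 0 := by positivity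
  have h2 : ((p:ℝ)+1) ≠ 0 := by positivity
  have h3 : (4:ℝ)^p ≠ 0 := by positivity
  rw [pow_succ, pow_succ]
  field_simp
  ring

/-! relation to besselJ / besselY -/

lemma besselJ_eq (r : ℝ) : besselJ 0 r = F aJ r := by
  rw [besselJ, F]
  apply tsum_congr
  intro p
  rw [aJ]
  have h1 : (r/2)^(0+2*p) = r^(2*p) / 4^p := by
    rw [Nat.zero_add, div_pow, show (2:ℝ)^(2*p) = 4^p from by rw [pow_mul]; norm_num]
  rw [h1]
  simp only [Nat.zero_add]
  have h2 : ((p.factorial:ℝ) * (p.factorial:ℝ)) = (p.factorial:ℝ)^2 := by ring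
  rw [h2]
  field_simp

lemma besselY_S_eq (z : ℝ) :
    (∑' p : ℕ, (-1:ℝ)^p * (phiH p + phiH (p+0))
      / ((Nat.factorial p : ℝ) * (Nat.factorial (p+0) : ℝ)) * (z/2)^(2*p+0)) = F aS z := by
  rw [F]
  apply tsum_congr
  intro p
  rw [aS]
  simp only [Nat.add_zero]
  have h1 : (z/2)^(2*p) = z^(2*p) / 4^p := by
    rw [div_pow, show (2:ℝ)^(2*p) = 4^p from by rw [pow_mul]; norm_num]
  rw [h1]
  have h2 : ((p.factorial:ℝ) * (p.factorial:ℝ)) = (p.factorial:ℝ)^2 := by ring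
  rw [h2]
  rw [div_mul_eq_mul_div, div_mul_eq_mul_div, div_eq_div_iff (by positivity) (by positivity)]
  have h4 : ((1:ℝ)/4)^p * 4^p = 1 := by
    rw [div_pow, one_pow, div_mul_cancel₀ _ (by positivity : ((4:ℝ)^p) ≠ 0)]
  ring_nf
  linear_combination (phiH p * z^(p*2) * ((p.factorial:ℝ))^2 * (-1)^p * 2) * h4

lemma besselY_eq (z : ℝ) : besselY 0 z =
    (2/Real.pi) * (Real.log (z/2) + Real.eulerMascheroniConstant) * F aJ z
      - (1/Real.pi) * F aS z := by
  rw [besselY, besselJ_eq, besselY_S_eq]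
  simp


/-! J, S, Y functions and their derivatives -/

noncomputable def Jf (x : ℝ) : ℝ := F aJ x
noncomputable def Jf' (x : ℝ) : ℝ := x * F (Dc aJ) x
noncomputable def Jf'' (x : ℝ) : ℝ := 1 * F (Dc aJ) x + x * (x * F (Dc (Dc aJ)) x)
noncomputable def Sf (x : ℝ) : ℝ := F aS x
noncomputable def Sf' (x : ℝ) : ℝ := x * F (Dc aS) x
noncomputable def Sf'' (x : ℝ) : ℝ := 1 * F (Dc aS) x + x * (x * F (Dc (Dc aS)) x)

lemma hasDerivAt_Jf (x : ℝ) : HasDerivAt Jf (Jf' x) x := hasDerivAt_F good_aJ x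
lemma hasDerivAt_Sf (x : ℝ) : HasDerivAt Sf (Sf' x) x := hasDerivAt_F good_aS x

lemma hasDerivAt_Jf' (x : ℝ) : HasDerivAt Jf' (Jf'' x) x :=
  (hasDerivAt_id x).mul (hasDerivAt_F good_aJ.Dc x)

lemma hasDerivAt_Sf' (x : ℝ) : HasDerivAt Sf' (Sf'' x) x :=
  (hasDerivAt_id x).mul (hasDerivAt_F good_aS.Dc x)

lemma good_zero : Good 0 (fun _ => (0:ℝ)) := by
  intro p; simp

lemma Jf_ODE (x : ℝ) : x * Jf'' x + Jf' x + x * Jf x = 0 := by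
  have h := series_ODE good_aJ good_zero rec_aJ x
  have h0 : F (Dc (fun _ => (0:ℝ))) x = 0 := by
    simp [F, Dc]
  rw [h0] at h
  rw [Jf'', Jf', Jf]
  linear_combination x * h

lemma Sf_ODE (x : ℝ) : x * Sf'' x + Sf' x + x * Sf x = 4 * Jf' x := by
  have h := series_ODE good_aS good_aJ rec_aS x
  rw [Sf'', Sf', Sf, Jf']
  linear_combination x * h

noncomputable def γRM : ℝ := Real.eulerMascheroniConstant

noncomputable def Yf (x : ℝ) : ℝ := (2/Real.pi)*((Real.log (x/2) + γRM)*Jf x) - (1/Real.pi)*Sf x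
noncomputable def Yf' (x : ℝ) : ℝ :=
  (2/Real.pi)*(x⁻¹*Jf x + (Real.log (x/2) + γRM)*Jf' x) - (1/Real.pi)*Sf' x
noncomputable def Yf'' (x : ℝ) : ℝ :=
  (2/Real.pi)*((-(x^2)⁻¹*Jf x + x⁻¹*Jf' x) + (x⁻¹*Jf' x + (Real.log (x/2) + γRM)*Jf'' x))
    - (1/Real.pi)*Sf'' x

lemma besselY_eq_Yf (z : ℝ) : besselY 0 z = Yf z := by
  rw [besselY_eq, Yf, Jf, Sf, γRM]; ring

lemma hasDerivAt_log_half {x : ℝ} (hx : 0 < x) :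
    HasDerivAt (fun y => Real.log (y/2) + γRM) x⁻¹ x := by
  have h := ((Real.hasDerivAt_log (by positivity : x/2 ≠ 0)).comp x
    ((hasDerivAt_id x).div_const 2)).add_const γRM
  refine h.congr_deriv ?_
  show (x/2)⁻¹ * (1/2) = x⁻¹
  field_simp

lemma hasDerivAt_Yf {x : ℝ} (hx : 0 < x) : HasDerivAt Yf (Yf' x) x := by
  have h1 := ((hasDerivAt_log_half hx).mul (hasDerivAt_Jf x)).const_mul (2/Real.pi)
  have h2 := (hasDerivAt_Sf x).const_mul (1/Real.pi)
  exact h1.sub h2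

lemma hasDerivAt_Yf' {x : ℝ} (hx : 0 < x) : HasDerivAt Yf' (Yf'' x) x := by
  have ha : HasDerivAt (fun y : ℝ => y⁻¹) (-(x^2)⁻¹) x := by
    have := hasDerivAt_inv (ne_of_gt hx)
    simpa using this
  have h1 := (ha.mul (hasDerivAt_Jf x)).add
    ((hasDerivAt_log_half hx).mul (hasDerivAt_Jf' x))
  have h2 := h1.const_mul (2/Real.pi)
  have h3 := (hasDerivAt_Sf' x).const_mul (1/Real.pi)
  have h4 := h2.sub h3
  exact h4

lemma Yf_ODE {x : ℝ} (hx : 0 < x) : x * Yf'' x + Yf' x + x * Yf x = 0 := by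
  have hJ := Jf_ODE x
  have hS := Sf_ODE x
  have hx' : x ≠ 0 := ne_of_gt hx
  have hπ : Real.pi ≠ 0 := Real.pi_ne_zero
  have e1 : x * x⁻¹ = 1 := mul_inv_cancel₀ hx'
  have e2 : x^2 * (x^2)⁻¹ = 1 := mul_inv_cancel₀ (by positivity)
  simp only [Yf'', Yf', Yf]
  linear_combination ((2/Real.pi)*(Real.log (x/2)+γRM))*hJ - (1/Real.pi)*hS
    + ((4/Real.pi)*Jf' x + (2/Real.pi)*Jf x*x*(x^2)⁻¹)*e1 + (-(2/Real.pi)*Jf x*x⁻¹)*e2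


/-! energy decay for solutions of the Bessel equation -/

noncomputable def En (u u' : ℝ → ℝ) (x : ℝ) : ℝ :=
  x*(u x * u x + u' x * u' x) + u x * u' x + (u x * u x)/(2*x)

lemma energy_decay (u u' u'' : ℝ → ℝ)
    (hd : ∀ x, 0 < x → HasDerivAt u (u' x) x)
    (hd2 : ∀ x, 0 < x → HasDerivAt u' (u'' x) x)
    (hode : ∀ x, 0 < x → x * u'' x + u' x + x * u x = 0) :
    ∀ x, 1 ≤ x → x * (u x * u x) ≤ En u u' 1 := by
  have hdE : ∀ x, 0 < x → HasDerivAt (En u u') (-(u x * u x)/(2*x^2)) x := by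
    intro x hx
    have hx' : x ≠ 0 := ne_of_gt hx
    have hu := hd x hx
    have hu' := hd2 x hx
    have A := (hasDerivAt_id x).mul ((hu.mul hu).add (hu'.mul hu'))
    have B := hu.mul hu'
    have C := (hu.mul hu).div ((hasDerivAt_id x).const_mul 2) (by simpa using hx')
    have total := (A.add B).add C
    refine total.congr_deriv ?_
    symm
    simp only [id, Pi.mul_apply, Pi.add_apply]
    have h := hode x hx
    field_simp
    ring_nf
    linear_combination (-4*x^2*u' x - 2*x*u x) * h
  have hmono : AntitoneOn (En u u') (Set.Ici 1) := by
    apply antitoneOn_of_deriv_nonpos (convex_Ici 1)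
    · intro x hx
      exact ((hdE x (lt_of_lt_of_le zero_lt_one hx)).continuousAt).continuousWithinAt
    · intro x hx
      rw [interior_Ici] at hx
      exact ((hdE x (lt_trans zero_lt_one hx)).differentiableAt).differentiableWithinAt
    · intro x hx
      rw [interior_Ici] at hx
      rw [(hdE x (lt_trans zero_lt_one hx)).deriv]
      apply div_nonpos_of_nonpos_of_nonneg
      · simpa using mul_self_nonneg (u x)
      · positivity
  intro x hx1
  have hx0 : 0 < x := lt_of_lt_of_le zero_lt_one hx1
  have h1 : En u u' x ≤ En u u' 1 := hmono (Set.self_mem_Ici) hx1 hx1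
  have h2 : x * (u x * u x) ≤ En u u' x := by
    rw [En]
    have e2 : (x*u' x + u x/2)^2/x = x*(u' x*u' x) + u x*u' x + (u x*u x)/(4*x) := by
      field_simp; ring
    have k1 : 0 ≤ (x*u' x + u x/2)^2 / x := div_nonneg (sq_nonneg _) hx0.le
    have k3 : 0 ≤ (u x*u x)/(4*x) := div_nonneg (mul_self_nonneg _) (by linarith)
    have e3 : (u x*u x)/(2*x) = (u x*u x)/(4*x) + (u x*u x)/(4*x) := by ring
    nlinarith [k1, k3, e2, e3]
  linarith


/-! boundedness of J and S on [0,∞) -/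

lemma continuous_Jf : Continuous Jf :=
  continuous_iff_continuousAt.mpr fun x => (hasDerivAt_Jf x).differentiableAt.continuousAt

lemma continuous_Sf : Continuous Sf :=
  continuous_iff_continuousAt.mpr fun x => (hasDerivAt_Sf x).differentiableAt.continuousAt

lemma Jf_decay : ∀ z, 1 ≤ z → |Jf z| * Real.sqrt z ≤ Real.sqrt (En Jf Jf' 1) := by
  intro z hz
  have h := energy_decay Jf Jf' Jf'' (fun x _ => hasDerivAt_Jf x)
    (fun x _ => hasDerivAt_Jf' x) (fun x _ => Jf_ODE x) z hz
  apply Real.le_sqrt_of_sq_le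
  have hz0 : (0:ℝ) ≤ z := by linarith
  have e : (|Jf z| * Real.sqrt z)^2 = (Jf z * Jf z) * z := by
    rw [mul_pow, Real.sq_sqrt hz0, sq_abs]; ring
  rw [e]; linarith

lemma Yf_decay : ∀ z, 1 ≤ z → |Yf z| * Real.sqrt z ≤ Real.sqrt (En Yf Yf' 1) := by
  intro z hz
  have h := energy_decay Yf Yf' Yf'' (fun x hx => hasDerivAt_Yf hx)
    (fun x hx => hasDerivAt_Yf' hx) (fun x hx => Yf_ODE hx) z hz
  apply Real.le_sqrt_of_sq_le
  have hz0 : (0:ℝ) ≤ z := by linarith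
  have e : (|Yf z| * Real.sqrt z)^2 = (Yf z * Yf z) * z := by
    rw [mul_pow, Real.sq_sqrt hz0, sq_abs]; ring
  rw [e]; linarith

lemma log_le_two_sqrt {z : ℝ} (hz : 1 ≤ z) : Real.log z ≤ 2 * Real.sqrt z := by
  have h0 : (0:ℝ) < z := by linarith
  have h1 : Real.log (Real.sqrt z) ≤ Real.sqrt z - 1 :=
    Real.log_le_sub_one_of_pos (Real.sqrt_pos.mpr h0)
  have h2 : Real.log (Real.sqrt z) = Real.log z / 2 := Real.log_sqrt h0.le
  have h3 : (0:ℝ) ≤ Real.sqrt z := Real.sqrt_nonneg z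
  linarith

lemma Sf_eq (z : ℝ) : Sf z = 2*((Real.log (z/2) + γRM)*Jf z) - Real.pi * Yf z := by
  rw [Yf]
  have hπ : Real.pi ≠ 0 := Real.pi_ne_zero
  field_simp
  ring

lemma bound_on_Icc (f : ℝ → ℝ) (hf : Continuous f) : ∃ C, ∀ z ∈ Set.Icc (0:ℝ) 1, |f z| ≤ C := by
  obtain ⟨C, hC⟩ := (isCompact_Icc (a := (0:ℝ)) (b := 1)).exists_bound_of_continuousOn
    hf.continuousOn
  exact ⟨C, fun z hz => hC z hz⟩

lemma Jf_bounded : ∃ C, ∀ z, 0 ≤ z → |Jf z| ≤ C := by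
  obtain ⟨B1, hB1⟩ := bound_on_Icc Jf continuous_Jf
  refine ⟨max B1 (Real.sqrt (En Jf Jf' 1)), fun z hz => ?_⟩
  rcases le_or_gt z 1 with h | h
  · exact le_trans (hB1 z ⟨hz, h⟩) (le_max_left _ _)
  · have hd := Jf_decay z h.le
    have h1 : (1:ℝ) ≤ Real.sqrt z := by
      rw [show (1:ℝ) = Real.sqrt 1 from (Real.sqrt_one).symm]
      exact Real.sqrt_le_sqrt h.le
    have : |Jf z| ≤ |Jf z| * Real.sqrt z := by
      nlinarith [abs_nonneg (Jf z)]
    exact le_trans (this.trans hd) (le_max_right _ _)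

lemma Sf_bounded : ∃ C, ∀ z, 0 ≤ z → |Sf z| ≤ C := by
  obtain ⟨B1, hB1⟩ := bound_on_Icc Sf continuous_Sf
  set c0 : ℝ := Real.log 2 + |γRM| with hc0
  have hc0nn : 0 ≤ c0 := by
    have := Real.log_pos (by norm_num : (1:ℝ) < 2)
    have := abs_nonneg γRM
    simp only [hc0]; linarith
  set EJ := Real.sqrt (En Jf Jf' 1) with hEJ
  set EY := Real.sqrt (En Yf Yf' 1) with hEY
  have hEJnn : 0 ≤ EJ := Real.sqrt_nonneg _
  have hEYnn : 0 ≤ EY := Real.sqrt_nonneg _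
  refine ⟨max B1 (2*(2+c0)*EJ + Real.pi * EY), fun z hz => ?_⟩
  rcases le_or_gt z 1 with h | h
  · exact le_trans (hB1 z ⟨hz, h⟩) (le_max_left _ _)
  · have hz1 : (1:ℝ) ≤ z := h.le
    have hz0 : (0:ℝ) < z := by linarith
    have hs1 : (1:ℝ) ≤ Real.sqrt z := by
      rw [show (1:ℝ) = Real.sqrt 1 from (Real.sqrt_one).symm]
      exact Real.sqrt_le_sqrt hz1
    have hJd := Jf_decay z hz1
    have hYd := Yf_decay z hz1
    have hlog : Real.log z ≤ 2 * Real.sqrt z := log_le_two_sqrt hz1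
    have hlz : (0:ℝ) ≤ Real.log z := Real.log_nonneg hz1
    have habs : |Real.log (z/2) + γRM| ≤ Real.log z + c0 := by
      rw [Real.log_div (ne_of_gt hz0) (by norm_num)]
      calc |Real.log z - Real.log 2 + γRM| ≤ |Real.log z| + |Real.log 2| + |γRM| := by
            apply (abs_add_le _ _).trans; gcongr; exact abs_sub _ _
        _ = Real.log z + c0 := by
            rw [abs_of_nonneg hlz, abs_of_nonneg (Real.log_nonneg (by norm_num))]
            simp only [hc0]; ring
    have key1 : |(Real.log (z/2) + γRM) * Jf z| ≤ (2+c0) * EJ := by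
      rw [abs_mul]
      calc |Real.log (z/2) + γRM| * |Jf z| ≤ (Real.log z + c0) * |Jf z| :=
            mul_le_mul_of_nonneg_right habs (abs_nonneg _)
        _ ≤ ((2+c0) * Real.sqrt z) * |Jf z| := by
            apply mul_le_mul_of_nonneg_right _ (abs_nonneg _)
            nlinarith
        _ = (2+c0) * (|Jf z| * Real.sqrt z) := by ring
        _ ≤ (2+c0) * EJ := by
            apply mul_le_mul_of_nonneg_left hJd (by linarith)
    have key2 : |Yf z| ≤ EY := by
      calc |Yf z| ≤ |Yf z| * Real.sqrt z := by nlinarith [abs_nonneg (Yf z)]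
        _ ≤ EY := hYd
    have hπpos := Real.pi_pos
    calc |Sf z| = |2*((Real.log (z/2) + γRM)*Jf z) - Real.pi * Yf z| := by rw [Sf_eq]
      _ ≤ 2*|(Real.log (z/2) + γRM)*Jf z| + Real.pi * |Yf z| := by
          have h1 : |2*((Real.log (z/2) + γRM)*Jf z) - Real.pi * Yf z|
              ≤ |2*((Real.log (z/2) + γRM)*Jf z)| + |Real.pi * Yf z| := abs_sub _ _
          rw [abs_mul Real.pi (Yf z), abs_of_nonneg hπpos.le,
            abs_mul (2:ℝ) ((Real.log (z/2) + γRM)*Jf z),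
            abs_of_nonneg (by norm_num : (0:ℝ) ≤ 2)] at h1
          exact h1
      _ ≤ 2*((2+c0)*EJ) + Real.pi * EY := by
          have := mul_le_mul_of_nonneg_left key2 hπpos.le
          linarith
      _ ≤ max B1 (2*(2+c0)*EJ + Real.pi * EY) := by
          apply le_trans _ (le_max_right _ _)
          linarith


/-! special values at 0 -/

lemma Jf_zero : Jf 0 = 1 := by
  rw [Jf, F]
  rw [tsum_eq_single 0 (fun p hp => by
    rcases Nat.exists_eq_succ_of_ne_zero hp with ⟨q, rfl⟩
    simp [pow_succ, zero_pow])]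
  simp [aJ]

lemma Sf_zero : Sf 0 = 0 := by
  rw [Sf, F]
  convert tsum_zero with p
  rcases Nat.eq_zero_or_pos p with rfl | hp
  · simp [aS, phiH]
  · rcases Nat.exists_eq_succ_of_ne_zero (Nat.pos_iff_ne_zero.mp hp) with ⟨q, rfl⟩
    simp [zero_pow]

/-! the extended slope function -/

section Slope
variable (f : ℝ → ℝ)

noncomputable def Qs (p : ℝ × ℝ) : ℝ :=
  if p.1 = p.2 then deriv f p.1 else (f p.1 - f p.2)/(p.1 - p.2)

lemma continuous_Qs (hf : ContDiff ℝ 1 f) : Continuous (Qs f) := by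
  rw [continuous_iff_continuousAt]
  rintro ⟨a, b⟩
  rcases ne_or_eq a b with hab | rfl
  · have hopen : IsOpen {p : ℝ × ℝ | p.1 ≠ p.2} := isOpen_ne_fun continuous_fst continuous_snd
    have hmem : (a, b) ∈ {p : ℝ × ℝ | p.1 ≠ p.2} := hab
    apply ContinuousAt.congr (f := fun p : ℝ × ℝ => (f p.1 - f p.2)/(p.1 - p.2))
    · apply ContinuousAt.div
      · exact ((hf.continuous.comp continuous_fst).sub
          (hf.continuous.comp continuous_snd)).continuousAt
      · exact (continuous_fst.sub continuous_snd).continuousAt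
      · simpa using sub_ne_zero_of_ne hab
    · filter_upwards [hopen.mem_nhds hmem] with p hp
      simp only [Qs, if_neg hp]
  · -- diagonal point
    have hsd : HasStrictDerivAt f (deriv f a) a :=
      (hf.contDiffAt).hasStrictDerivAt one_ne_zero
    have hlo := hsd.hasStrictFDerivAt.isLittleO
    have hc : ContinuousAt (deriv f) a := (hf.continuous_deriv le_rfl).continuousAt
    have hQval : Qs f (a, a) = deriv f a := by simp [Qs]
    rw [ContinuousAt, hQval, Metric.tendsto_nhds]
    intro ε hε
    have h1 := hlo.def (show (0:ℝ) < ε/2 by linarith)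
    have h2 : ∀ᶠ p : ℝ × ℝ in 𝓝 (a, a), dist (deriv f p.1) (deriv f a) < ε/2 := by
      have : Tendsto (fun p : ℝ × ℝ => deriv f p.1) (𝓝 (a, a)) (𝓝 (deriv f a)) :=
        by exact hc.comp (f := Prod.fst) (x := (a, a)) continuousAt_fst
      exact this (Metric.ball_mem_nhds _ (by linarith))
    filter_upwards [h1, h2] with p hp1 hp2
    rcases eq_or_ne p.1 p.2 with he | he
    · rw [Qs, if_pos he, Real.dist_eq]
      rw [Real.dist_eq] at hp2
      calc |deriv f p.1 - deriv f a| < ε/2 := hp2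
        _ < ε := by linarith
    · rw [Qs, if_neg he, Real.dist_eq]
      have hd : p.1 - p.2 ≠ 0 := sub_ne_zero_of_ne he
      have heq : (f p.1 - f p.2)/(p.1 - p.2) - deriv f a
          = (f p.1 - f p.2 - (p.1 - p.2) * deriv f a)/(p.1 - p.2) := by
        field_simp
      rw [heq, abs_div]
      simp only [ContinuousLinearMap.smulRight_apply, ContinuousLinearMap.one_apply,
        ContinuousLinearMap.toSpanSingleton_apply,
        smul_eq_mul, Real.norm_eq_abs] at hp1
      have habs : |p.1 - p.2| > 0 := abs_pos.mpr hd
      rw [div_lt_iff₀ habs]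
      calc |f p.1 - f p.2 - (p.1 - p.2) * deriv f a| ≤ ε/2 * |p.1 - p.2| := by
            convert hp1 using 3 <;> ring
        _ < ε * |p.1 - p.2| := by nlinarith

lemma Qs_bound (hf : ContDiff ℝ 1 f) {C : ℝ} (hC : ∀ x, |deriv f x| ≤ C) :
    ∀ p, |Qs f p| ≤ C := by
  have hC0 : 0 ≤ C := le_trans (abs_nonneg _) (hC 0)
  have hlip : LipschitzWith (Real.toNNReal C) f := by
    apply lipschitzWith_of_nnnorm_deriv_le (hf.differentiable one_ne_zero)
    intro x
    rw [← NNReal.coe_le_coe]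
    simp only [coe_nnnorm, Real.norm_eq_abs, Real.coe_toNNReal C hC0]
    exact hC x
  rintro ⟨s, t⟩
  rcases eq_or_ne s t with rfl | hst
  · simpa [Qs] using hC s
  · rw [Qs, if_neg hst]
    have hd : s - t ≠ 0 := sub_ne_zero_of_ne hst
    rw [abs_div, div_le_iff₀ (abs_pos.mpr hd)]
    have := hlip.dist_le_mul s t
    rw [Real.dist_eq, Real.dist_eq, Real.coe_toNNReal C hC0] at this
    exact this

end Slope


lemma rF_eq (f : ℝ → ℝ) {s t : ℝ} (hst : s ≠ t) :
    Real.sqrt ((s-t)^2 + (f s - f t)^2) = |s - t| * Real.sqrt (1 + (Qs f (s,t))^2) := by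
  have hd : s - t ≠ 0 := sub_ne_zero_of_ne hst
  have hQ : Qs f (s,t) = (f s - f t)/(s - t) := by rw [Qs, if_neg hst]
  rw [hQ]
  have h1 : (s-t)^2 + (f s - f t)^2 = (s-t)^2 * (1 + ((f s - f t)/(s-t))^2) := by
    field_simp
  rw [h1, Real.sqrt_mul (sq_nonneg _), Real.sqrt_sq_eq_abs]

end Rho0Aux

open Rho0Aux

/-- the regularized kernel ρ₀ extends to a bounded continuous function on ℝ². -/
theorem rho0_extends (κ : ℝ) (hκ : 0 < κ) (f : ℝ → ℝ)
    (hf : ContDiff ℝ 1 f) (hfb : ∃ C, ∀ x, |f x| ≤ C) (hfb' : ∃ C, ∀ x, |deriv f x| ≤ C) :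
    ∃ g : ℝ × ℝ → ℂ, Continuous g ∧ (∃ C, ∀ p, ‖g p‖ ≤ C) ∧
      (∀ s t : ℝ, s ≠ t →
        g (s, t) = besselH 0 (κ * Real.sqrt ((s-t)^2 + (f s - f t)^2))
          - (2*Complex.I/(Real.pi : ℂ))
              * ((besselJ 0 (κ * Real.sqrt ((s-t)^2 + (f s - f t)^2)) : ℝ) : ℂ)
              * ((Real.log |s - t| : ℝ) : ℂ)) ∧
      (∀ s : ℝ, g (s, s) = 1 + (2*Complex.I/(Real.pi : ℂ)) * (Real.eulerMascheroniConstant : ℂ)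
          + (2*Complex.I/(Real.pi : ℂ))
              * ((Real.log ((κ/2) * Real.sqrt (1 + (deriv f s)^2)) : ℝ) : ℂ)) := by
  obtain ⟨C', hC'⟩ := hfb'
  have hC'0 : 0 ≤ C' := le_trans (abs_nonneg _) (hC' 0)
  have hπ : (0:ℝ) < Real.pi := Real.pi_pos
  have hπC : (Real.pi : ℂ) ≠ 0 := by exact_mod_cast Real.pi_ne_zero
  set Q : ℝ × ℝ → ℝ := Qs f with hQdef
  set rF : ℝ × ℝ → ℝ := fun p => Real.sqrt ((p.1-p.2)^2 + (f p.1 - f p.2)^2) with hrFdef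
  set L : ℝ × ℝ → ℝ := fun p => γRM + Real.log ((κ/2) * Real.sqrt (1 + Q p^2)) with hLdef
  set g : ℝ × ℝ → ℂ := fun p =>
    (Jf (κ * rF p) : ℂ) * (1 + (2*Complex.I/(Real.pi:ℂ)) * ((L p : ℝ) : ℂ)) -
      (Complex.I/(Real.pi:ℂ)) * ((Sf (κ * rF p) : ℝ) : ℂ) with hgdef
  have hQcont : Continuous Q := continuous_Qs f hf
  have hrcont : Continuous rF := Real.continuous_sqrt.comp
    (((continuous_fst.sub continuous_snd).pow 2).add
      (((hf.continuous.comp continuous_fst).sub (hf.continuous.comp continuous_snd)).pow 2))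
  have hsq1 : ∀ p, (1:ℝ) ≤ Real.sqrt (1 + Q p^2) := by
    intro p
    have h := Real.sqrt_le_sqrt (show (1:ℝ) ≤ 1 + Q p^2 by nlinarith [sq_nonneg (Q p)])
    rwa [Real.sqrt_one] at h
  have hinpos : ∀ p, (0:ℝ) < (κ/2) * Real.sqrt (1 + Q p^2) := by
    intro p
    have := hsq1 p
    have : (0:ℝ) < Real.sqrt (1 + Q p^2) := by linarith
    positivity
  have hLcont : Continuous L := by
    apply continuous_const.add
    apply Continuous.log
    · exact continuous_const.mul (Real.continuous_sqrt.comp (continuous_const.add (hQcont.pow 2)))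
    · exact fun p => ne_of_gt (hinpos p)
  have hgcont : Continuous g := by
    apply Continuous.sub
    · apply Continuous.mul
      · exact Complex.continuous_ofReal.comp (continuous_Jf.comp (continuous_const.mul hrcont))
      · exact continuous_const.add
          (continuous_const.mul (Complex.continuous_ofReal.comp hLcont))
    · exact continuous_const.mul
        (Complex.continuous_ofReal.comp (continuous_Sf.comp (continuous_const.mul hrcont)))
  refine ⟨g, hgcont, ?_, ?_, ?_⟩
  · -- boundedness
    obtain ⟨CJ, hCJ⟩ := Jf_bounded
    obtain ⟨CS, hCS⟩ := Sf_bounded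
    have hCJ0 : 0 ≤ CJ := le_trans (abs_nonneg _) (hCJ 0 le_rfl)
    have hCS0 : 0 ≤ CS := le_trans (abs_nonneg _) (hCS 0 le_rfl)
    set ML : ℝ := |γRM| + (|Real.log (κ/2)| + Real.log (Real.sqrt (1 + C'^2))) with hML
    have hlogs : (0:ℝ) ≤ Real.log (Real.sqrt (1 + C'^2)) := by
      apply Real.log_nonneg
      have h := Real.sqrt_le_sqrt (show (1:ℝ) ≤ 1 + C'^2 by nlinarith)
      rwa [Real.sqrt_one] at h
    have hLbound : ∀ p, |L p| ≤ ML := by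
      intro p
      have hQb : |Q p| ≤ C' := Qs_bound f hf hC' p
      have h1 : Real.log ((κ/2) * Real.sqrt (1 + Q p^2))
          = Real.log (κ/2) + Real.log (Real.sqrt (1 + Q p^2)) :=
        Real.log_mul (by positivity) (by have := hsq1 p; linarith)
      have h2 : (0:ℝ) ≤ Real.log (Real.sqrt (1 + Q p^2)) :=
        Real.log_nonneg (hsq1 p)
      have h3 : Real.log (Real.sqrt (1 + Q p^2)) ≤ Real.log (Real.sqrt (1 + C'^2)) := by
        apply Real.log_le_log (by have := hsq1 p; linarith)
        apply Real.sqrt_le_sqrt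
        nlinarith [sq_abs (Q p), mul_self_le_mul_self (abs_nonneg (Q p)) hQb]
      calc |L p| ≤ |γRM| + |Real.log ((κ/2) * Real.sqrt (1 + Q p^2))| := abs_add_le _ _
        _ ≤ |γRM| + (|Real.log (κ/2)| + Real.log (Real.sqrt (1 + C'^2))) := by
            rw [h1]
            have h4 : |Real.log (κ/2) + Real.log (Real.sqrt (1 + Q p^2))|
                ≤ |Real.log (κ/2)| + |Real.log (Real.sqrt (1 + Q p^2))| := abs_add_le _ _
            rw [abs_of_nonneg h2] at h4
            linarith
        _ = ML := rfl
    refine ⟨CJ * (1 + (2/Real.pi)*ML) + (1/Real.pi)*CS, fun p => ?_⟩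
    have hz0 : 0 ≤ κ * rF p := mul_nonneg hκ.le (Real.sqrt_nonneg _)
    have hML0 : 0 ≤ ML := le_trans (abs_nonneg _) (hLbound p)
    have n1 : ‖(Jf (κ * rF p) : ℂ)‖ = |Jf (κ * rF p)| := by
      rw [Complex.norm_real, Real.norm_eq_abs]
    have nc1 : ‖2*Complex.I/(Real.pi:ℂ)‖ = 2/Real.pi := by
      rw [norm_div, norm_mul, Complex.norm_I, mul_one, Complex.norm_real, Real.norm_eq_abs,
        abs_of_pos hπ]
      norm_num
    have nc2 : ‖Complex.I/(Real.pi:ℂ)‖ = 1/Real.pi := by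
      rw [norm_div, Complex.norm_I, Complex.norm_real, Real.norm_eq_abs, abs_of_pos hπ]
    have n2 : ‖(1 + (2*Complex.I/(Real.pi:ℂ)) * ((L p : ℝ) : ℂ))‖ ≤ 1 + (2/Real.pi) * ML := by
      apply (norm_add_le _ _).trans
      rw [norm_one, norm_mul, nc1, Complex.norm_real, Real.norm_eq_abs]
      have h5 : (2/Real.pi) * |L p| ≤ (2/Real.pi) * ML :=
        mul_le_mul_of_nonneg_left (hLbound p) (by positivity)
      linarith
    have n3 : ‖(Sf (κ * rF p) : ℂ)‖ = |Sf (κ * rF p)| := by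
      rw [Complex.norm_real, Real.norm_eq_abs]
    calc ‖g p‖ ≤ ‖(Jf (κ * rF p) : ℂ) * (1 + (2*Complex.I/(Real.pi:ℂ)) * ((L p : ℝ) : ℂ))‖
          + ‖(Complex.I/(Real.pi:ℂ)) * ((Sf (κ * rF p) : ℝ) : ℂ)‖ := norm_sub_le _ _
      _ = ‖(Jf (κ * rF p) : ℂ)‖ * ‖(1 + (2*Complex.I/(Real.pi:ℂ)) * ((L p : ℝ) : ℂ))‖
          + ‖Complex.I/(Real.pi:ℂ)‖ * ‖(Sf (κ * rF p) : ℂ)‖ := by rw [norm_mul, norm_mul]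
      _ ≤ CJ * (1 + (2/Real.pi)*ML) + (1/Real.pi)*CS := by
          rw [n1, nc2, n3]
          have b1 : |Jf (κ * rF p)| ≤ CJ := hCJ _ hz0
          have b2 : |Sf (κ * rF p)| ≤ CS := hCS _ hz0
          have b3 : (0:ℝ) ≤ 1 + (2/Real.pi)*ML := by positivity
          have b4 := mul_le_mul b1 n2 (norm_nonneg _) hCJ0
          have b5 := mul_le_mul_of_nonneg_left b2 (show (0:ℝ) ≤ 1/Real.pi by positivity)
          linarith
  · -- off-diagonal formula
    intro s t hst
    have hd : s - t ≠ 0 := sub_ne_zero_of_ne hst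
    have habs0 : (0:ℝ) < |s - t| := abs_pos.mpr hd
    have hrfac : rF (s,t) = |s - t| * Real.sqrt (1 + Q (s,t)^2) := rF_eq f hst
    have hrpos : (0:ℝ) < rF (s,t) := by
      rw [hrfac]
      exact mul_pos habs0 (by have := hsq1 (s,t); linarith)
    have hlog : Real.log (κ * rF (s,t) / 2)
        = Real.log |s - t| + Real.log ((κ/2) * Real.sqrt (1 + Q (s,t)^2)) := by
      rw [show κ * rF (s,t) / 2 = |s - t| * ((κ/2) * Real.sqrt (1 + Q (s,t)^2)) by
        rw [hrfac]; ring]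
      exact Real.log_mul (ne_of_gt habs0) (ne_of_gt (hinpos (s,t)))
    show (Jf (κ * rF (s,t)) : ℂ) * (1 + (2*Complex.I/(Real.pi:ℂ)) * ((L (s,t) : ℝ) : ℂ)) -
      (Complex.I/(Real.pi:ℂ)) * ((Sf (κ * rF (s,t)) : ℝ) : ℂ) = _
    have harg : κ * Real.sqrt ((s-t)^2 + (f s - f t)^2) = κ * rF (s,t) := rfl
    rw [harg, besselH, besselJ_eq, besselY_eq_Yf, Yf]
    rw [show Jf (κ * rF (s,t)) = F aJ (κ * rF (s,t)) from rfl] 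
    have hLval : L (s,t) = γRM + Real.log ((κ/2) * Real.sqrt (1 + Q (s,t)^2)) := rfl
    rw [hLval, hlog]
    push_cast
    set X := (F aJ (κ * rF (s,t)) : ℂ)
    set Y := (Sf (κ * rF (s,t)) : ℂ)
    set l1 := (Real.log |s - t| : ℂ)
    set l2 := (Real.log ((κ/2) * Real.sqrt (1 + Q (s,t)^2)) : ℂ)
    set gam := (γRM : ℂ)
    field_simp
    ring
  · -- diagonal value
    intro s
    have hr0 : rF (s,s) = 0 := by
      show Real.sqrt ((s-s)^2 + (f s - f s)^2) = 0
      simp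
    have hQd : Q (s,s) = deriv f s := by
      show Qs f (s,s) = deriv f s
      rw [Qs, if_pos rfl]
    show (Jf (κ * rF (s,s)) : ℂ) * (1 + (2*Complex.I/(Real.pi:ℂ)) * ((L (s,s) : ℝ) : ℂ)) -
      (Complex.I/(Real.pi:ℂ)) * ((Sf (κ * rF (s,s)) : ℝ) : ℂ) = _
    rw [hr0, mul_zero, Jf_zero, Sf_zero]
    have hLval : L (s,s) = γRM + Real.log ((κ/2) * Real.sqrt (1 + (deriv f s)^2)) := by
      show γRM + Real.log ((κ/2) * Real.sqrt (1 + Q (s,s)^2)) = _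
      rw [hQd]
    rw [hLval]
    rw [show γRM = Real.eulerMascheroniConstant from rfl]
    push_cast
    ring
end

section
/- Let f : ℝ → ℝ be in BC^{n+2}(ℝ) (bounded with bounded continuous derivatives up to order n+2). Then the function g(s,t) := r(s,t)/|s−t| with r(s,t) = √((s−t)² + (f(s)−f(t))²), extended by g(s,s) = √(1+f'(s)²), belongs to BC^n(ℝ²): it is bounded, continuous, and has bounded continuous partial derivatives up to total order n on ℝ². -/
set_option maxHeartbeats 1000000
set_option synthInstance.maxHeartbeats 400000
open MeasureTheory intervalIntegral Set

noncomputable def Qaux (f : ℝ → ℝ) (a b m : ℕ) (p : ℝ × ℝ) : ℝ :=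
  ∫ u in (0:ℝ)..1, u^a * (1-u)^b * iteratedDeriv m f (p.2 + u * (p.1 - p.2))

noncomputable def Lu (u : ℝ) : ℝ × ℝ →L[ℝ] ℝ :=
  ContinuousLinearMap.snd ℝ ℝ ℝ +
    u • (ContinuousLinearMap.fst ℝ ℝ ℝ - ContinuousLinearMap.snd ℝ ℝ ℝ)

@[simp] lemma Lu_apply (u : ℝ) (p : ℝ × ℝ) : Lu u p = p.2 + u * (p.1 - p.2) := rfl

lemma Lu_norm_le (u : ℝ) (hu : u ∈ Set.Icc (0:ℝ) 1) : ‖Lu u‖ ≤ 1 := by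
  refine ContinuousLinearMap.opNorm_le_bound _ zero_le_one fun p => ?_
  rw [Lu_apply, one_mul]
  have h1 : |p.1| ≤ ‖p‖ := norm_fst_le p
  have h2 : |p.2| ≤ ‖p‖ := norm_snd_le p
  rcases hu with ⟨h0, hle⟩
  have he : p.2 + u * (p.1 - p.2) = (1-u) * p.2 + u * p.1 := by ring
  rw [he]
  calc |(1-u) * p.2 + u * p.1| ≤ |(1-u) * p.2| + |u * p.1| := abs_add_le _ _
    _ = (1-u) * |p.2| + u * |p.1| := by
        rw [abs_mul, abs_mul, abs_of_nonneg (by linarith), abs_of_nonneg h0]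
    _ ≤ (1-u) * ‖p‖ + u * ‖p‖ := by gcongr <;> linarith
    _ = ‖p‖ := by ring

lemma Lu_decomp (u : ℝ) : Lu u = u • ContinuousLinearMap.fst ℝ ℝ ℝ +
    (1-u) • ContinuousLinearMap.snd ℝ ℝ ℝ := by
  refine ContinuousLinearMap.ext fun p => ?_
  simp [Lu]
  ring

lemma Lu_continuous : Continuous Lu :=
  continuous_const.add (continuous_id.smul continuous_const)

lemma weight_bound {u : ℝ} (a b : ℕ) (hu : u ∈ Set.Icc (0:ℝ) 1) : |u^a * (1-u)^b| ≤ 1 := by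
  rcases hu with ⟨h0, h1⟩
  rw [abs_mul, abs_pow, abs_pow, abs_of_nonneg h0, abs_of_nonneg (by linarith)]
  exact mul_le_one₀ (pow_le_one₀ h0 h1) (pow_nonneg (by linarith) _)
    (pow_le_one₀ (by linarith) (by linarith))

lemma Qaux_hasFDerivAt (f : ℝ → ℝ) (a b m : ℕ)
    (hdm : Differentiable ℝ (iteratedDeriv m f))
    (hcm : Continuous (iteratedDeriv m f))
    (hcm1 : Continuous (iteratedDeriv (m+1) f))
    (C : ℝ) (hC : ∀ x, |iteratedDeriv (m+1) f x| ≤ C) (p : ℝ × ℝ) :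
    HasFDerivAt (Qaux f a b m)
      (Qaux f (a+1) b (m+1) p • ContinuousLinearMap.fst ℝ ℝ ℝ +
        Qaux f a (b+1) (m+1) p • ContinuousLinearMap.snd ℝ ℝ ℝ) p := by
  set F : (ℝ×ℝ) → ℝ → ℝ := fun x u => u^a * (1-u)^b * iteratedDeriv m f (x.2 + u * (x.1 - x.2))
    with hF
  set F' : (ℝ×ℝ) → ℝ → ((ℝ×ℝ) →L[ℝ] ℝ) := fun x u =>
    (u^a * (1-u)^b * iteratedDeriv (m+1) f (x.2 + u * (x.1 - x.2))) • Lu u with hF'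
  have hCnonneg : 0 ≤ C := le_trans (abs_nonneg _) (hC 0)
  have hcont : ∀ x : ℝ × ℝ, Continuous (F x) := by
    intro x
    exact ((continuous_pow a).mul ((continuous_const.sub continuous_id).pow b)).mul
      (hcm.comp (by fun_prop))
  have hcont' : Continuous (F' p) := by
    refine Continuous.smul (f := fun u : ℝ => u^a * (1-u)^b * iteratedDeriv (m+1) f (p.2 + u * (p.1 - p.2))) ?_ Lu_continuous
    exact ((continuous_pow a).mul ((continuous_const.sub continuous_id).pow b)).mul
      (hcm1.comp (by fun_prop))
  have key := intervalIntegral.hasFDerivAt_integral_of_dominated_of_fderiv_le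
    (𝕜 := ℝ) (μ := volume) (F := F) (F' := F') (x₀ := p) (a := 0) (b := 1)
    (bound := fun _ => C) (s := Set.univ) Filter.univ_mem
    (Filter.Eventually.of_forall fun x => (hcont x).aestronglyMeasurable)
    ((hcont p).intervalIntegrable _ _)
    hcont'.aestronglyMeasurable
    ?_ intervalIntegrable_const ?_
  · -- rewrite the conclusion
    have hint : (∫ u in (0:ℝ)..1, F' p u) =
        Qaux f (a+1) b (m+1) p • ContinuousLinearMap.fst ℝ ℝ ℝ +
          Qaux f a (b+1) (m+1) p • ContinuousLinearMap.snd ℝ ℝ ℝ := by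
      have heq : ∀ u : ℝ, F' p u =
          (u^(a+1) * (1-u)^b * iteratedDeriv (m+1) f (p.2 + u * (p.1 - p.2))) •
            ContinuousLinearMap.fst ℝ ℝ ℝ +
          (u^a * (1-u)^(b+1) * iteratedDeriv (m+1) f (p.2 + u * (p.1 - p.2))) •
            ContinuousLinearMap.snd ℝ ℝ ℝ := by
        intro u
        show (u^a * (1-u)^b * iteratedDeriv (m+1) f (p.2 + u * (p.1 - p.2))) • Lu u = _
        rw [Lu_decomp, smul_add, smul_smul, smul_smul]
        have hs1 : u^a * (1-u)^b * iteratedDeriv (m+1) f (p.2 + u * (p.1 - p.2)) * u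
            = u^(a+1) * (1-u)^b * iteratedDeriv (m+1) f (p.2 + u * (p.1 - p.2)) := by ring
        have hs2 : u^a * (1-u)^b * iteratedDeriv (m+1) f (p.2 + u * (p.1 - p.2)) * (1-u)
            = u^a * (1-u)^(b+1) * iteratedDeriv (m+1) f (p.2 + u * (p.1 - p.2)) := by ring
        rw [hs1, hs2]
      rw [intervalIntegral.integral_congr (g := fun u =>
          (u^(a+1) * (1-u)^b * iteratedDeriv (m+1) f (p.2 + u * (p.1 - p.2))) •
            ContinuousLinearMap.fst ℝ ℝ ℝ +
          (u^a * (1-u)^(b+1) * iteratedDeriv (m+1) f (p.2 + u * (p.1 - p.2))) •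
            ContinuousLinearMap.snd ℝ ℝ ℝ) (fun u _ => heq u)]
      rw [intervalIntegral.integral_add, intervalIntegral.integral_smul_const,
        intervalIntegral.integral_smul_const]
      · rfl
      · exact (Continuous.smul (f := fun u : ℝ => u^(a+1) * (1-u)^b * iteratedDeriv (m+1) f (p.2 + u * (p.1 - p.2))) (by fun_prop) continuous_const).intervalIntegrable _ _
      · exact (Continuous.smul (f := fun u : ℝ => u^a * (1-u)^(b+1) * iteratedDeriv (m+1) f (p.2 + u * (p.1 - p.2))) (by fun_prop) continuous_const).intervalIntegrable _ _
    rw [hint] at key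
    exact key
  · refine Filter.Eventually.of_forall fun u hu => fun x _ => ?_
    rw [Set.uIoc_of_le zero_le_one] at hu
    have hu' : u ∈ Set.Icc (0:ℝ) 1 := ⟨le_of_lt hu.1, hu.2⟩
    have h1 : |u^a * (1-u)^b * iteratedDeriv (m+1) f (x.2 + u * (x.1 - x.2))| ≤ C := by
      rw [abs_mul]
      exact le_trans (mul_le_mul (weight_bound a b hu') (hC _) (abs_nonneg _) zero_le_one)
        (by linarith)
    refine le_trans (ContinuousLinearMap.opNorm_smul_le _ _) ?_
    calc ‖u^a * (1-u)^b * iteratedDeriv (m+1) f (x.2 + u * (x.1 - x.2))‖ * ‖Lu u‖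
        ≤ C * 1 := mul_le_mul (by rwa [Real.norm_eq_abs]) (Lu_norm_le u hu')
          (norm_nonneg _) hCnonneg
      _ = C := mul_one C
  · refine Filter.Eventually.of_forall fun u hu => fun x _ => ?_
    have h1 : HasDerivAt (iteratedDeriv m f)
        (iteratedDeriv (m+1) f (Lu u x)) (Lu u x) := by
      rw [iteratedDeriv_succ]
      exact (hdm (Lu u x)).hasDerivAt
    have h2 : HasFDerivAt (fun y : ℝ × ℝ => iteratedDeriv m f (Lu u y))
        ((iteratedDeriv (m+1) f (Lu u x)) • Lu u) x :=
      h1.comp_hasFDerivAt x (Lu u).hasFDerivAt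
    have h3 := h2.const_mul (u^a * (1-u)^b)
    rw [smul_smul] at h3
    exact h3

lemma Qaux_bound (f : ℝ → ℝ) (a b m : ℕ) (C : ℝ) (hC : ∀ x, |iteratedDeriv m f x| ≤ C)
    (p : ℝ × ℝ) : |Qaux f a b m p| ≤ C := by
  have := intervalIntegral.norm_integral_le_of_norm_le_const (C := C) (a := (0:ℝ)) (b := 1)
    (f := fun u => u^a * (1-u)^b * iteratedDeriv m f (p.2 + u * (p.1 - p.2))) ?_
  · simpa [Qaux] using this
  · intro u hu
    rw [Set.uIoc_of_le zero_le_one] at hu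
    have hu' : u ∈ Set.Icc (0:ℝ) 1 := ⟨le_of_lt hu.1, hu.2⟩
    calc ‖u^a * (1-u)^b * iteratedDeriv m f (p.2 + u * (p.1 - p.2))‖
        = |u^a * (1-u)^b| * |iteratedDeriv m f (p.2 + u * (p.1 - p.2))| := abs_mul _ _
      _ ≤ 1 * C := mul_le_mul (weight_bound a b hu') (hC _) (abs_nonneg _) zero_le_one
      _ = C := one_mul C

lemma Qaux_continuous (f : ℝ → ℝ) (a b m : ℕ) (hc : Continuous (iteratedDeriv m f)) :
    Continuous (Qaux f a b m) := by
  apply continuous_parametric_intervalIntegral_of_continuous'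
  exact ((continuous_pow a).comp continuous_snd |>.mul
    ((continuous_const.sub continuous_snd).pow b)).mul (hc.comp (by fun_prop))

lemma Qaux_main (N : ℕ) (f : ℝ → ℝ) (hf : ContDiff ℝ (N : ℕ) f)
    (hb : ∀ k ≤ N, ∃ C, ∀ x, |iteratedDeriv k f x| ≤ C) :
    ∀ (k a b m : ℕ), m + k ≤ N →
      ContDiff ℝ (k : ℕ) (Qaux f a b m) ∧
        ∀ j ≤ k, ∃ C, ∀ p, ‖iteratedFDeriv ℝ j (Qaux f a b m) p‖ ≤ C := by
  have hc : ∀ m, m ≤ N → Continuous (iteratedDeriv m f) := fun m hm =>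
    hf.continuous_iteratedDeriv m (by exact_mod_cast hm)
  have hd : ∀ m, m < N → Differentiable ℝ (iteratedDeriv m f) := fun m hm =>
    hf.differentiable_iteratedDeriv m (by exact_mod_cast hm)
  intro k
  induction k with
  | zero =>
    intro a b m hm
    refine ⟨contDiff_zero.mpr (Qaux_continuous f a b m (hc m (by omega))), ?_⟩
    intro j hj
    interval_cases j
    obtain ⟨C, hC⟩ := hb m (by omega)
    exact ⟨C, fun p => by
      rw [norm_iteratedFDeriv_zero, Real.norm_eq_abs]
      exact Qaux_bound f a b m C hC p⟩
  | succ k IH =>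
    intro a b m hm
    obtain ⟨C, hC⟩ := hb (m+1) (by omega)
    have hder := Qaux_hasFDerivAt f a b m (hd m (by omega)) (hc m (by omega))
      (hc (m+1) (by omega)) C hC
    have IH1 := IH (a+1) b (m+1) (by omega)
    have IH2 := IH a (b+1) (m+1) (by omega)
    have hfd : fderiv ℝ (Qaux f a b m) = fun p =>
        Qaux f (a+1) b (m+1) p • ContinuousLinearMap.fst ℝ ℝ ℝ +
          Qaux f a (b+1) (m+1) p • ContinuousLinearMap.snd ℝ ℝ ℝ :=
      funext fun p => (hder p).fderiv
    have hcdf : ContDiff ℝ (k : ℕ) (fderiv ℝ (Qaux f a b m)) := by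
      rw [hfd]
      exact (IH1.1.smul contDiff_const).add (IH2.1.smul contDiff_const)
    have hcd : ContDiff ℝ ((k+1 : ℕ) : ℕ) (Qaux f a b m) := by
      have hcast : (((k+1 : ℕ) : ℕ) : WithTop ℕ∞) = ((k : ℕ) : WithTop ℕ∞) + 1 := by
        norm_cast
      rw [hcast, contDiff_succ_iff_fderiv]
      refine ⟨fun p => (hder p).differentiableAt, ?_, hcdf⟩
      intro h
      simp at h
    refine ⟨hcd, ?_⟩
    intro j hj
    match j with
    | 0 =>
      obtain ⟨C0, hC0⟩ := hb m (by omega)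
      exact ⟨C0, fun p => by
        rw [norm_iteratedFDeriv_zero, Real.norm_eq_abs]
        exact Qaux_bound f a b m C0 hC0 p⟩
    | (i+1) =>
      have hi : i ≤ k := by omega
      obtain ⟨C1, hC1⟩ := IH1.2 i hi
      obtain ⟨C2, hC2⟩ := IH2.2 i hi
      set A1 : ℝ →L[ℝ] (ℝ × ℝ →L[ℝ] ℝ) :=
        (ContinuousLinearMap.id ℝ ℝ).smulRight (ContinuousLinearMap.fst ℝ ℝ ℝ) with hA1
      set A2 : ℝ →L[ℝ] (ℝ × ℝ →L[ℝ] ℝ) :=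
        (ContinuousLinearMap.id ℝ ℝ).smulRight (ContinuousLinearMap.snd ℝ ℝ ℝ) with hA2
      refine ⟨‖A1‖ * C1 + ‖A2‖ * C2, fun p => ?_⟩
      rw [← norm_iteratedFDeriv_fderiv, hfd]
      have hXc : ContDiff ℝ (i : ℕ) (fun p =>
          Qaux f (a+1) b (m+1) p • ContinuousLinearMap.fst ℝ ℝ ℝ) :=
        (IH1.1.smul contDiff_const).of_le (by exact_mod_cast hi)
      have hYc : ContDiff ℝ (i : ℕ) (fun p =>
          Qaux f a (b+1) (m+1) p • ContinuousLinearMap.snd ℝ ℝ ℝ) :=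
        (IH2.1.smul contDiff_const).of_le (by exact_mod_cast hi)
      rw [iteratedFDeriv_add_apply' hXc.contDiffAt hYc.contDiffAt]
      refine le_trans (norm_add_le _ _) (add_le_add ?_ ?_)
      · have he : (fun p : ℝ × ℝ => Qaux f (a+1) b (m+1) p • ContinuousLinearMap.fst ℝ ℝ ℝ)
            = A1 ∘ (Qaux f (a+1) b (m+1)) := by
          funext q
          simp [hA1]
        rw [he, A1.iteratedFDeriv_comp_left (IH1.1.contDiffAt (x := p)) (by exact_mod_cast hi)]
        exact le_trans (A1.norm_compContinuousMultilinearMap_le _)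
          (mul_le_mul_of_nonneg_left (hC1 p) (norm_nonneg A1))
      · have he : (fun p : ℝ × ℝ => Qaux f a (b+1) (m+1) p • ContinuousLinearMap.snd ℝ ℝ ℝ)
            = A2 ∘ (Qaux f a (b+1) (m+1)) := by
          funext q
          simp [hA2]
        rw [he, A2.iteratedFDeriv_comp_left (IH2.1.contDiffAt (x := p)) (by exact_mod_cast hi)]
        exact le_trans (A2.norm_compContinuousMultilinearMap_le _)
          (mul_le_mul_of_nonneg_left (hC2 p) (norm_nonneg A2))

lemma bdd_finite (k : ℕ) (φ : ℕ → ℝ) : ∃ C, ∀ i ≤ k, φ i ≤ C := by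
  induction k with
  | zero => exact ⟨φ 0, fun i hi => by simp [Nat.le_zero.mp hi]⟩
  | succ k IH =>
    obtain ⟨C, hC⟩ := IH
    refine ⟨max C (φ (k+1)), fun i hi => ?_⟩
    rcases Nat.lt_succ_iff_lt_or_eq.mp (Nat.lt_succ_of_le hi) with h | h
    · exact le_trans (hC i (by omega)) (le_max_left _ _)
    · exact h ▸ le_max_right _ _

lemma sqrt_one_add_sq_contDiff : ContDiff ℝ (⊤ : WithTop ℕ∞)
    (fun x : ℝ => Real.sqrt (1 + x^2)) := by
  rw [contDiff_iff_contDiffAt]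
  intro x
  exact (Real.contDiffAt_sqrt (by positivity)).comp x (by fun_prop)

lemma div_diff_eq (f : ℝ → ℝ) (hd : Differentiable ℝ f) (hc : Continuous (deriv f))
    (s t : ℝ) (hst : s ≠ t) :
    (∫ u in (0:ℝ)..1, deriv f (t + u * (s - t))) = (f s - f t) / (s - t) := by
  have hst' : s - t ≠ 0 := sub_ne_zero.mpr hst
  have key : (∫ u in (0:ℝ)..1, (s - t) * deriv f (t + u * (s - t))) = f s - f t := by
    have hder : ∀ u ∈ Set.uIcc (0:ℝ) 1, HasDerivAt (fun u : ℝ => f (t + u * (s - t)))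
        ((s - t) * deriv f (t + u * (s - t))) u := by
      intro u _
      have h1 : HasDerivAt (fun u : ℝ => t + u * (s - t)) (s - t) u := by
        simpa using (((hasDerivAt_id u).mul_const (s - t)).const_add t)
      have h2 : HasDerivAt f (deriv f (t + u * (s - t))) (t + u * (s - t)) :=
        (hd _).hasDerivAt
      have h3 := h2.comp u h1
      rw [mul_comm] at h3
      exact h3
    rw [intervalIntegral.integral_eq_sub_of_hasDerivAt hder
      ((continuous_const.mul (hc.comp (by fun_prop))).intervalIntegrable _ _)]
    simp
  rw [intervalIntegral.integral_const_mul] at key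
  field_simp
  rw [mul_comm]
  exact (mul_comm _ _).trans key


/-- r(s,t)/|s−t| extends to a BCⁿ(ℝ²) function if f ∈ BC^{n+2}(ℝ). -/
theorem dist_ratio_BCn (n : ℕ) (f : ℝ → ℝ)
    (hf : ContDiff ℝ (n+2 : ℕ) f)
    (hfb : ∀ k ≤ n+2, ∃ C, ∀ x, |iteratedDeriv k f x| ≤ C) :
    ∃ g : ℝ × ℝ → ℝ, ContDiff ℝ (n : ℕ) g ∧
      (∀ k ≤ n, ∃ C, ∀ p : ℝ × ℝ, ‖iteratedFDeriv ℝ k g p‖ ≤ C) ∧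
      (∀ s t : ℝ, s ≠ t →
        g (s, t) = Real.sqrt ((s-t)^2 + (f s - f t)^2) / |s - t|) ∧
      (∀ s : ℝ, g (s, s) = Real.sqrt (1 + (deriv f s)^2)) := by
  have main := Qaux_main (n+2) f hf hfb n 0 0 1 (by omega)
  set q := Qaux f 0 0 1 with hq
  have hderivf : Differentiable ℝ f := hf.differentiable (by simp)
  have hcderiv : Continuous (deriv f) := hf.continuous_deriv (by exact_mod_cast Nat.le_add_left 1 (n+1))
  have hq_off : ∀ s t : ℝ, s ≠ t → q (s,t) = (f s - f t)/(s-t) := by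
    intro s t hst
    have h0 : q (s,t) = ∫ u in (0:ℝ)..1, deriv f (t + u*(s-t)) := by
      simp [hq, Qaux, iteratedDeriv_one]
    rw [h0, div_diff_eq f hderivf hcderiv s t hst]
  have hq_diag : ∀ s : ℝ, q (s,s) = deriv f s := by
    intro s
    simp [hq, Qaux, iteratedDeriv_one]
  set h : ℝ → ℝ := fun x => Real.sqrt (1+x^2) with hh
  refine ⟨h ∘ q, ?_, ?_, ?_, ?_⟩
  · exact (sqrt_one_add_sq_contDiff.of_le le_top).comp main.1
  · intro k hk
    obtain ⟨C0, hC0⟩ := hfb 1 (by omega)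
    have hqb : ∀ p, |q p| ≤ |C0| :=
      fun p => Qaux_bound f 0 0 1 |C0| (fun x => (hC0 x).trans (le_abs_self C0)) p
    have hBex : ∀ i : ℕ, ∃ B, ∀ y ∈ Set.Icc (-|C0|) |C0|, ‖iteratedFDeriv ℝ i h y‖ ≤ B := by
      intro i
      exact isCompact_Icc.exists_bound_of_continuousOn
        ((sqrt_one_add_sq_contDiff.continuous_iteratedFDeriv le_top).continuousOn)
    choose B hB using hBex
    obtain ⟨CB, hCB⟩ := bdd_finite k B
    have hDex : ∀ i : ℕ, ∃ D, i ≤ n → ∀ p, ‖iteratedFDeriv ℝ i q p‖ ≤ D := by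
      intro i
      by_cases hi : i ≤ n
      · obtain ⟨D, hD⟩ := main.2 i hi
        exact ⟨D, fun _ => hD⟩
      · exact ⟨0, fun h' => absurd h' hi⟩
    choose D hD using hDex
    obtain ⟨E, hE⟩ := bdd_finite k D
    refine ⟨(Nat.factorial k : ℝ) * CB * (max 1 E) ^ k, fun p => ?_⟩
    refine norm_iteratedFDeriv_comp_le (g := h) (f := q) (N := ((n:ℕ) : WithTop ℕ∞))
      (sqrt_one_add_sq_contDiff.of_le le_top) main.1 (by exact_mod_cast hk) p ?_ ?_
    · intro i hik
      refine le_trans (hB i (q p) ?_) (hCB i hik)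
      have := abs_le.mp (hqb p)
      exact ⟨this.1, this.2⟩
    · intro i h1i hik
      refine le_trans (hD i (by omega) p) ?_
      refine le_trans (hE i hik) (le_trans (le_max_right 1 E) ?_)
      exact le_self_pow₀ (le_max_left 1 E) (by omega)
  · intro s t hst
    have hst' : s - t ≠ 0 := sub_ne_zero.mpr hst
    have habs : |s - t| ≠ 0 := abs_ne_zero.mpr hst'
    show h (q (s,t)) = _
    rw [hq_off s t hst, hh]
    have he : (s-t)^2 + (f s - f t)^2 = (s-t)^2 * (1 + ((f s - f t)/(s-t))^2) := by
      field_simp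
    rw [he, Real.sqrt_mul (sq_nonneg _), Real.sqrt_sq_eq_abs,
      mul_div_cancel_left₀ _ habs]
  · intro s
    show h (q (s,s)) = _
    rw [hq_diag]
end

section
/- Let f ∈ BC^{n+2}(ℝ). Define ξ(s,t) = [(s−t)f'(t) + f(t) − f(s)] / r(s,t)² for s ≠ t, where r(s,t) = √((s−t)² + (f(s)−f(t))²). Then ξ extends to a function in BC^n(ℝ²), and its diagonal value is ξ(s,s) = −f''(s) / (2(1+f'(s)²)). -/
set_option maxHeartbeats 1000000
set_option synthInstance.maxHeartbeats 400000

open MeasureTheory intervalIntegral Set ContinuousLinearMap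

noncomputable def Jfun (w h : ℝ → ℝ) : ℝ × ℝ → ℝ :=
  fun p => ∫ u in (0:ℝ)..1, w u * h (u * p.1 + (1 - u) * p.2)


lemma Jfun_norm_le {w h : ℝ → ℝ} {C0 : ℝ}
    (hwb : ∀ u ∈ Set.Icc (0:ℝ) 1, |w u| ≤ 1) (hb : ∀ x, |h x| ≤ C0) (p : ℝ × ℝ) :
    |Jfun w h p| ≤ C0 := by
  have h01 : Set.uIoc (0:ℝ) 1 ⊆ Set.Icc 0 1 := by
    rw [Set.uIoc_of_le (by norm_num)]; exact Set.Ioc_subset_Icc_self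
  have := intervalIntegral.norm_integral_le_of_norm_le_const
    (C := C0) (f := fun u => w u * h (u * p.1 + (1 - u) * p.2))
    (a := 0) (b := 1) ?_
  · simpa [Jfun] using this
  · intro u hu
    have h1 : |w u| ≤ 1 := hwb u (h01 hu)
    have h2 : |h (u * p.1 + (1 - u) * p.2)| ≤ C0 := hb _
    calc ‖w u * h (u * p.1 + (1 - u) * p.2)‖ = |w u| * |h _| := abs_mul _ _
      _ ≤ 1 * C0 := mul_le_mul h1 h2 (abs_nonneg _) zero_le_one
      _ = C0 := one_mul _

noncomputable def Lc (u : ℝ) : ℝ × ℝ →L[ℝ] ℝ :=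
  u • ContinuousLinearMap.fst ℝ ℝ ℝ + (1 - u) • ContinuousLinearMap.snd ℝ ℝ ℝ

@[simp] lemma Lc_apply (u : ℝ) (x : ℝ × ℝ) : Lc u x = u * x.1 + (1 - u) * x.2 := by
  simp [Lc]

lemma Lc_norm_le (u : ℝ) (hu : u ∈ Set.Icc (0:ℝ) 1) : ‖Lc u‖ ≤ 2 := by
  have h1 : ‖u • ContinuousLinearMap.fst ℝ ℝ ℝ‖ ≤ 1 := by
    refine le_trans (ContinuousLinearMap.opNorm_smul_le _ _) ?_
    calc ‖u‖ * ‖ContinuousLinearMap.fst ℝ ℝ ℝ‖ ≤ 1 * 1 := by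
          apply mul_le_mul _ (ContinuousLinearMap.norm_fst_le ..) (norm_nonneg _) zero_le_one
          rw [Real.norm_eq_abs, abs_le]; constructor <;> linarith [hu.1, hu.2]
      _ = 1 := one_mul _
  have h2 : ‖(1-u) • ContinuousLinearMap.snd ℝ ℝ ℝ‖ ≤ 1 := by
    refine le_trans (ContinuousLinearMap.opNorm_smul_le _ _) ?_
    calc ‖1-u‖ * ‖ContinuousLinearMap.snd ℝ ℝ ℝ‖ ≤ 1 * 1 := by
          apply mul_le_mul _ (ContinuousLinearMap.norm_snd_le ..) (norm_nonneg _) zero_le_one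
          rw [Real.norm_eq_abs, abs_le]; constructor <;> linarith [hu.1, hu.2]
      _ = 1 := one_mul _
  calc ‖Lc u‖ ≤ _ + _ := norm_add_le _ _
    _ ≤ 1 + 1 := add_le_add h1 h2
    _ = 2 := by norm_num

lemma J_hasFDerivAt (w h : ℝ → ℝ) (hw : Continuous w) (hh : ContDiff ℝ 1 h)
    (C : ℝ) (hC : ∀ x, |deriv h x| ≤ C) (x : ℝ × ℝ) :
    HasFDerivAt (Jfun w h)
      ((Jfun (fun u => u * w u) (deriv h) x) • ContinuousLinearMap.fst ℝ ℝ ℝ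
        + (Jfun (fun u => (1 - u) * w u) (deriv h) x) • ContinuousLinearMap.snd ℝ ℝ ℝ) x := by
  have hdh : Continuous (deriv h) := (contDiff_one_iff_deriv.mp hh).2
  have hhc : Continuous h := hh.continuous
  have hhd : Differentiable ℝ h := hh.differentiable one_ne_zero
  have h01 : Set.uIoc (0:ℝ) 1 ⊆ Set.Icc 0 1 := by
    rw [Set.uIoc_of_le (by norm_num)]; exact Set.Ioc_subset_Icc_self
  -- the main dominated-derivative step
  have key := intervalIntegral.hasFDerivAt_integral_of_dominated_of_fderiv_le
    (𝕜 := ℝ) (μ := volume) (a := 0) (b := 1) (s := Metric.ball x 1)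
    (F := fun (y : ℝ × ℝ) u => w u * h (u * y.1 + (1 - u) * y.2))
    (F' := fun (y : ℝ × ℝ) u => (w u * deriv h (u * y.1 + (1 - u) * y.2)) • Lc u)
    (bound := fun u => |w u| * (C * 2)) (x₀ := x)
    (Metric.ball_mem_nhds x one_pos) ?_ ?_ ?_ ?_ ?_ ?_
  · -- now rewrite the integral of F' to the desired form
    have hI : (∫ u in (0:ℝ)..1, (w u * deriv h (u * x.1 + (1 - u) * x.2)) • Lc u)
        = (Jfun (fun u => u * w u) (deriv h) x) • ContinuousLinearMap.fst ℝ ℝ ℝ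
          + (Jfun (fun u => (1 - u) * w u) (deriv h) x) • ContinuousLinearMap.snd ℝ ℝ ℝ := by
      have hc1 : Continuous fun u : ℝ => (u * w u) * deriv h (u * x.1 + (1 - u) * x.2) := by
        fun_prop
      have hc2 : Continuous fun u : ℝ => ((1 - u) * w u) * deriv h (u * x.1 + (1 - u) * x.2) := by
        fun_prop
      have : (fun u : ℝ => (w u * deriv h (u * x.1 + (1 - u) * x.2)) • Lc u)
          = fun u : ℝ => ((u * w u) * deriv h (u * x.1 + (1 - u) * x.2)) • ContinuousLinearMap.fst ℝ ℝ ℝ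
            + (((1 - u) * w u) * deriv h (u * x.1 + (1 - u) * x.2)) • ContinuousLinearMap.snd ℝ ℝ ℝ := by
        funext u
        simp only [Lc, smul_add, smul_smul]
        ring_nf
      rw [this, intervalIntegral.integral_add
        ((hc1.fun_smul continuous_const).intervalIntegrable _ _)
        ((hc2.fun_smul continuous_const).intervalIntegrable _ _),
        intervalIntegral.integral_smul_const, intervalIntegral.integral_smul_const]
      rfl
    rw [hI] at key
    exact key
  · filter_upwards with y
    exact ((hw.comp continuous_id).mul (hhc.comp (by fun_prop))).aestronglyMeasurable
  · exact ((hw.mul (hhc.comp (by fun_prop))).intervalIntegrable _ _)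
  · apply Continuous.aestronglyMeasurable
    apply Continuous.fun_smul
    · fun_prop
    · exact ((continuous_id.smul continuous_const).add
        ((continuous_const.sub continuous_id).smul continuous_const))
  · filter_upwards with u hu y _
    have hu' := h01 hu
    refine le_trans (ContinuousLinearMap.opNorm_smul_le _ _) ?_
    calc ‖w u * deriv h (u * y.1 + (1 - u) * y.2)‖ * ‖Lc u‖
        ≤ (|w u| * C) * 2 := by
          apply mul_le_mul _ (Lc_norm_le u hu') (norm_nonneg _) ?_
          · rw [Real.norm_eq_abs, abs_mul]
            exact mul_le_mul_of_nonneg_left (hC _) (abs_nonneg _)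
          · exact mul_nonneg (abs_nonneg _) ((abs_nonneg _).trans (hC 0))
      _ = |w u| * (C * 2) := by ring
  · exact ((hw.abs.mul continuous_const).intervalIntegrable _ _)
  · filter_upwards with u _ y _
    have h1 : HasFDerivAt (fun y : ℝ × ℝ => u * y.1 + (1 - u) * y.2) (Lc u) y :=
      ((Lc u).hasFDerivAt (x := y)).congr_of_eventuallyEq
        (Filter.Eventually.of_forall fun z => (Lc_apply u z).symm)
    have h2 : HasDerivAt h (deriv h (u * y.1 + (1 - u) * y.2)) (u * y.1 + (1 - u) * y.2) :=
      (hhd _).hasDerivAt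
    have h3 := (h2.comp_hasFDerivAt y h1).const_mul (w u)
    rw [← smul_smul]
    exact h3

lemma exists_unif {α : Type*} (n : ℕ) (F : ℕ → α → ℝ)
    (h : ∀ k ≤ n, ∃ C, ∀ p, F k p ≤ C) : ∃ C, ∀ k ≤ n, ∀ p, F k p ≤ C := by
  induction n with
  | zero =>
    obtain ⟨C, hC⟩ := h 0 le_rfl
    exact ⟨C, fun k hk p => by rw [Nat.le_zero.mp hk]; exact hC p⟩
  | succ n ih =>
    obtain ⟨C, hC⟩ := ih fun k hk => h k (hk.trans (Nat.le_succ n))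
    obtain ⟨C', hC'⟩ := h (n+1) le_rfl
    refine ⟨max C C', fun k hk p => ?_⟩
    rcases Nat.lt_succ_iff_lt_or_eq.mp (Nat.lt_succ_of_le hk) with h' | h'
    · exact (hC k (Nat.lt_succ_iff.mp h') p).trans (le_max_left _ _)
    · subst h'; exact (hC' p).trans (le_max_right _ _)

lemma J_main (m : ℕ) : ∀ (h w : ℝ → ℝ), ContDiff ℝ (m : ℕ) h →
    (∀ k ≤ m, ∃ C, ∀ x, |iteratedDeriv k h x| ≤ C) →
    Continuous w → (∀ u ∈ Set.Icc (0:ℝ) 1, |w u| ≤ 1) →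
    ContDiff ℝ (m : ℕ) (Jfun w h) ∧
      ∀ k ≤ m, ∃ C, ∀ p : ℝ × ℝ, ‖iteratedFDeriv ℝ k (Jfun w h) p‖ ≤ C := by
  induction m with
  | zero =>
    intro h w hh hhb hw hwb
    constructor
    · rw [show ((0:ℕ) : WithTop ℕ∞) = 0 from rfl, contDiff_zero]
      have hch : Continuous h := hh.continuous
      exact continuous_parametric_intervalIntegral_of_continuous'
        (by fun_prop : Continuous (Function.uncurry
          fun (p : ℝ × ℝ) (u : ℝ) => w u * h (u * p.1 + (1 - u) * p.2))) 0 1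
    · intro k hk
      obtain ⟨C0, hC0⟩ := hhb 0 le_rfl
      simp only [iteratedDeriv_zero] at hC0
      refine ⟨C0, fun p => ?_⟩
      rw [Nat.le_zero.mp hk, norm_iteratedFDeriv_zero, Real.norm_eq_abs]
      exact Jfun_norm_le hwb hC0 p
  | succ m ih =>
    intro h w hh hhb hw hwb
    have hh1 : ContDiff ℝ ((m : WithTop ℕ∞) + 1) h := by
      have : ((m + 1 : ℕ) : WithTop ℕ∞) = (m : WithTop ℕ∞) + 1 := by push_cast; ring
      rwa [this] at hh
    obtain ⟨hdiffh, -, hh'⟩ := contDiff_succ_iff_deriv.mp hh1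
    have hh'b : ∀ k ≤ m, ∃ C, ∀ x, |iteratedDeriv k (deriv h) x| ≤ C := by
      intro k hk
      obtain ⟨C, hC⟩ := hhb (k+1) (by omega)
      exact ⟨C, fun x => by rw [← iteratedDeriv_succ']; exact hC x⟩
    obtain ⟨C1, hC1⟩ := hhb 1 (by omega)
    simp only [iteratedDeriv_one] at hC1
    have hcd1 : ContDiff ℝ 1 h := hh.of_le (by exact_mod_cast (by omega : (1:ℕ) ≤ m+1))
    set w1 : ℝ → ℝ := fun u => u * w u with hw1def
    set w2 : ℝ → ℝ := fun u => (1 - u) * w u with hw2def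
    have hw1 : Continuous w1 := by fun_prop
    have hw2 : Continuous w2 := by fun_prop
    have hw1b : ∀ u ∈ Set.Icc (0:ℝ) 1, |w1 u| ≤ 1 := by
      intro u hu
      rw [hw1def, abs_mul]
      calc |u| * |w u| ≤ 1 * 1 := mul_le_mul (abs_le.mpr ⟨by linarith [hu.1], hu.2⟩)
            (hwb u hu) (abs_nonneg _) zero_le_one
        _ = 1 := one_mul _
    have hw2b : ∀ u ∈ Set.Icc (0:ℝ) 1, |w2 u| ≤ 1 := by
      intro u hu
      rw [hw2def, abs_mul]
      calc |1-u| * |w u| ≤ 1 * 1 := mul_le_mul (abs_le.mpr ⟨by linarith [hu.2], by linarith [hu.1]⟩)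
            (hwb u hu) (abs_nonneg _) zero_le_one
        _ = 1 := one_mul _
    obtain ⟨ihc1, ihb1⟩ := ih (deriv h) w1 hh' hh'b hw1 hw1b
    obtain ⟨ihc2, ihb2⟩ := ih (deriv h) w2 hh' hh'b hw2 hw2b
    have hasF : ∀ x, HasFDerivAt (Jfun w h)
        ((Jfun w1 (deriv h) x) • ContinuousLinearMap.fst ℝ ℝ ℝ
          + (Jfun w2 (deriv h) x) • ContinuousLinearMap.snd ℝ ℝ ℝ) x :=
      fun x => J_hasFDerivAt w h hw hcd1 C1 hC1 x
    have hdiffJ : Differentiable ℝ (Jfun w h) := fun x => (hasF x).differentiableAt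
    have hfderiv : fderiv ℝ (Jfun w h) = fun x =>
        (Jfun w1 (deriv h) x) • ContinuousLinearMap.fst ℝ ℝ ℝ
          + (Jfun w2 (deriv h) x) • ContinuousLinearMap.snd ℝ ℝ ℝ :=
      funext fun x => (hasF x).fderiv
    have hfcd : ContDiff ℝ (m : ℕ) (fderiv ℝ (Jfun w h)) := by
      rw [hfderiv]
      exact (ihc1.smul contDiff_const).add (ihc2.smul contDiff_const)
    constructor
    · have : ((m + 1 : ℕ) : WithTop ℕ∞) = (m : WithTop ℕ∞) + 1 := by push_cast; ring
      rw [this, contDiff_succ_iff_fderiv]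
      refine ⟨hdiffJ, ?_, hfcd⟩
      intro hcon
      exact absurd hcon (by simp)
    · intro k hk
      match k with
      | 0 =>
        obtain ⟨C0, hC0⟩ := hhb 0 (by omega)
        simp only [iteratedDeriv_zero] at hC0
        refine ⟨C0, fun p => ?_⟩
        rw [norm_iteratedFDeriv_zero, Real.norm_eq_abs]
        exact Jfun_norm_le hwb hC0 p
      | (j+1) =>
        obtain ⟨Ca, hCa⟩ := ihb1 j (by omega)
        obtain ⟨Cb, hCb⟩ := ihb2 j (by omega)
        set T1 : ℝ →L[ℝ] (ℝ × ℝ →L[ℝ] ℝ) :=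
          (ContinuousLinearMap.id ℝ ℝ).smulRight (ContinuousLinearMap.fst ℝ ℝ ℝ) with hT1
        set T2 : ℝ →L[ℝ] (ℝ × ℝ →L[ℝ] ℝ) :=
          (ContinuousLinearMap.id ℝ ℝ).smulRight (ContinuousLinearMap.snd ℝ ℝ ℝ) with hT2
        refine ⟨‖T1‖ * Ca + ‖T2‖ * Cb, fun p => ?_⟩
        rw [← norm_iteratedFDeriv_fderiv, hfderiv]
        have hjm : (j : WithTop ℕ∞) ≤ (m : ℕ) := by exact_mod_cast (by omega : j ≤ m)
        have e1 : (fun x : ℝ × ℝ => (Jfun w1 (deriv h) x) • ContinuousLinearMap.fst ℝ ℝ ℝ)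
            = T1 ∘ (Jfun w1 (deriv h)) := by funext x; simp [hT1]
        have e2 : (fun x : ℝ × ℝ => (Jfun w2 (deriv h) x) • ContinuousLinearMap.snd ℝ ℝ ℝ)
            = T2 ∘ (Jfun w2 (deriv h)) := by funext x; simp [hT2]
        have hcd1' : ContDiff ℝ (j : ℕ) (fun x : ℝ × ℝ =>
            (Jfun w1 (deriv h) x) • ContinuousLinearMap.fst ℝ ℝ ℝ) :=
          (ihc1.of_le hjm).smul contDiff_const
        have hcd2' : ContDiff ℝ (j : ℕ) (fun x : ℝ × ℝ =>
            (Jfun w2 (deriv h) x) • ContinuousLinearMap.snd ℝ ℝ ℝ) :=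
          (ihc2.of_le hjm).smul contDiff_const
        calc ‖iteratedFDeriv ℝ j (fun x => (Jfun w1 (deriv h) x) • ContinuousLinearMap.fst ℝ ℝ ℝ
              + (Jfun w2 (deriv h) x) • ContinuousLinearMap.snd ℝ ℝ ℝ) p‖
            ≤ ‖iteratedFDeriv ℝ j (fun x => (Jfun w1 (deriv h) x) • ContinuousLinearMap.fst ℝ ℝ ℝ) p‖
              + ‖iteratedFDeriv ℝ j (fun x => (Jfun w2 (deriv h) x) • ContinuousLinearMap.snd ℝ ℝ ℝ) p‖ := by
              rw [show (fun x : ℝ × ℝ => (Jfun w1 (deriv h) x) • ContinuousLinearMap.fst ℝ ℝ ℝ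
                  + (Jfun w2 (deriv h) x) • ContinuousLinearMap.snd ℝ ℝ ℝ)
                = (fun x => (Jfun w1 (deriv h) x) • ContinuousLinearMap.fst ℝ ℝ ℝ)
                  + (fun x => (Jfun w2 (deriv h) x) • ContinuousLinearMap.snd ℝ ℝ ℝ) from rfl]
              rw [iteratedFDeriv_add_apply hcd1'.contDiffAt hcd2'.contDiffAt]
              exact norm_add_le _ _
          _ ≤ ‖T1‖ * Ca + ‖T2‖ * Cb := by
              apply add_le_add
              · rw [e1, ContinuousLinearMap.iteratedFDeriv_comp_left T1 ((ihc1.of_le hjm).contDiffAt (x := p)) le_rfl]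
                exact (ContinuousLinearMap.norm_compContinuousMultilinearMap_le _ _).trans
                  (mul_le_mul_of_nonneg_left (hCa p) (norm_nonneg _))
              · rw [e2, ContinuousLinearMap.iteratedFDeriv_comp_left T2 ((ihc2.of_le hjm).contDiffAt (x := p)) le_rfl]
                exact (ContinuousLinearMap.norm_compContinuousMultilinearMap_le _ _).trans
                  (mul_le_mul_of_nonneg_left (hCb p) (norm_nonneg _))


/-- ξ(s,t) = [(s−t)f'(t)+f(t)−f(s)]/r² extends to BCⁿ(ℝ²),
with diagonal value −f''(s)/(2(1+f'(s)²)). -/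
theorem xi_BCn (n : ℕ) (f : ℝ → ℝ)
    (hf : ContDiff ℝ (n+2 : ℕ) f)
    (hfb : ∀ k ≤ n+2, ∃ C, ∀ x, |iteratedDeriv k f x| ≤ C) :
    ∃ g : ℝ × ℝ → ℝ, ContDiff ℝ (n : ℕ) g ∧
      (∀ k ≤ n, ∃ C, ∀ p : ℝ × ℝ, ‖iteratedFDeriv ℝ k g p‖ ≤ C) ∧
      (∀ s t : ℝ, s ≠ t →
        g (s, t) = ((s-t) * deriv f t + f t - f s) / ((s-t)^2 + (f s - f t)^2)) ∧
      (∀ s : ℝ, g (s, s) = -(deriv (deriv f) s) / (2 * (1 + (deriv f s)^2))) := by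
  -- basic regularity of f, f', f''
  have hfc1 : ContDiff ℝ (((n+1:ℕ) : WithTop ℕ∞) + 1) f := by
    have : ((n+2:ℕ) : WithTop ℕ∞) = ((n+1:ℕ) : WithTop ℕ∞) + 1 := by push_cast; ring
    rwa [this] at hf
  obtain ⟨hfd, -, hf1⟩ := contDiff_succ_iff_deriv.mp hfc1
  have hf1' : ContDiff ℝ ((n : WithTop ℕ∞) + 1) (deriv f) := by
    have : ((n+1:ℕ) : WithTop ℕ∞) = (n : WithTop ℕ∞) + 1 := by push_cast; ring
    rwa [this] at hf1
  obtain ⟨hd1d, -, hf2⟩ := contDiff_succ_iff_deriv.mp hf1'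
  have hd1cont : Continuous (deriv f) := hf1.continuous
  have hd2cont : Continuous (deriv (deriv f)) := hf2.continuous
  -- bounds for derivatives of f' and f''
  have hb1 : ∀ k ≤ n+1, ∃ C, ∀ x, |iteratedDeriv k (deriv f) x| ≤ C := by
    intro k hk
    obtain ⟨C, hC⟩ := hfb (k+1) (by omega)
    exact ⟨C, fun x => by rw [← iteratedDeriv_succ']; exact hC x⟩
  have hb2 : ∀ k ≤ n, ∃ C, ∀ x, |iteratedDeriv k (deriv (deriv f)) x| ≤ C := by
    intro k hk
    obtain ⟨C, hC⟩ := hb1 (k+1) (by omega)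
    exact ⟨C, fun x => by rw [← iteratedDeriv_succ']; exact hC x⟩
  -- A and Q
  set A : ℝ × ℝ → ℝ := Jfun (fun u => 1 - u) (deriv (deriv f)) with hAdef
  set Q : ℝ × ℝ → ℝ := Jfun (fun _ => (1:ℝ)) (deriv f) with hQdef
  obtain ⟨hAc, hAb⟩ := J_main n (deriv (deriv f)) (fun u => 1 - u) hf2 hb2
    (by fun_prop) (fun u hu => by rw [abs_le]; constructor <;> [linarith [hu.2]; linarith [hu.1]])
  obtain ⟨hQc, hQb⟩ := J_main n (deriv f) (fun _ => (1:ℝ))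
    (hf1.of_le (by exact_mod_cast (by omega : n ≤ n+1)))
    (fun k hk => hb1 k (by omega)) continuous_const (fun u _ => by norm_num)
  rw [← hAdef] at hAc hAb
  rw [← hQdef] at hQc hQb
  -- the function ψ
  set ψ : ℝ → ℝ := fun q => (1 + q^2)⁻¹ with hψdef
  have hψ : ContDiff ℝ (n : ℕ) ψ :=
    (contDiff_const.add (contDiff_id.pow 2)).inv fun x => by positivity
  refine ⟨fun p => -(A p) * ψ (Q p), hAc.neg.mul (hψ.comp hQc), ?_, ?_, ?_⟩
  · -- bounds
    obtain ⟨CA, hCA⟩ := exists_unif n (fun k p => ‖iteratedFDeriv ℝ k A p‖) hAb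
    obtain ⟨CQ, hCQ⟩ := exists_unif n (fun k p => ‖iteratedFDeriv ℝ k Q p‖) hQb
    -- bound on Q itself
    have hM : ∀ p, Q p ∈ Set.Icc (-CQ) CQ := by
      intro p
      have := hCQ 0 (Nat.zero_le n) p
      rw [norm_iteratedFDeriv_zero, Real.norm_eq_abs] at this
      exact ⟨neg_le_of_abs_le this, le_of_abs_le this⟩
    -- bounds for derivatives of ψ on the compact set
    have hψb : ∀ k ≤ n, ∃ C, ∀ y : Set.Icc (-CQ) CQ, ‖iteratedFDeriv ℝ k ψ (y : ℝ)‖ ≤ C := by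
      intro k hk
      obtain ⟨C, hC⟩ := (isCompact_Icc (a := -CQ) (b := CQ)).exists_bound_of_continuousOn
        ((hψ.continuous_iteratedFDeriv (by exact_mod_cast hk)).continuousOn)
      exact ⟨C, fun y => hC y y.2⟩
    obtain ⟨Cψ0, hCψ0⟩ := exists_unif n (fun k (y : Set.Icc (-CQ) CQ) =>
      ‖iteratedFDeriv ℝ k ψ (y : ℝ)‖) hψb
    set Cψ := max Cψ0 0 with hCψdef
    set D := max CQ 1 with hDdef
    have hD1 : (1:ℝ) ≤ D := le_max_right _ _
    have hCψ0' : (0:ℝ) ≤ Cψ := le_max_right _ _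
    set B := (n.factorial : ℝ) * Cψ * D^n with hBdef
    have hB0 : (0:ℝ) ≤ B := by positivity
    set CA' := max CA 0 with hCA'def
    have hCA'0 : (0:ℝ) ≤ CA' := le_max_right _ _
    -- bound for iterated derivatives of ψ ∘ Q
    have hcomp : ∀ i ≤ n, ∀ p : ℝ × ℝ, ‖iteratedFDeriv ℝ i (fun p => ψ (Q p)) p‖ ≤ B := by
      intro i hi p
      have h1 : ‖iteratedFDeriv ℝ i (ψ ∘ Q) p‖ ≤ (i.factorial : ℝ) * Cψ * D^i := by
        apply norm_iteratedFDeriv_comp_le (N := ((n:ℕ) : WithTop ℕ∞)) hψ hQc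
          (by exact_mod_cast hi) p
        · intro j hj
          exact ((hCψ0 j (hj.trans hi) ⟨Q p, hM p⟩)).trans (le_max_left _ _)
        · intro j hj1 hji
          calc ‖iteratedFDeriv ℝ j Q p‖ ≤ CQ := hCQ j (hji.trans hi) p
            _ ≤ D := le_max_left _ _
            _ ≤ D^j := le_self_pow₀ hD1 (by omega)
      calc ‖iteratedFDeriv ℝ i (fun p => ψ (Q p)) p‖
          = ‖iteratedFDeriv ℝ i (ψ ∘ Q) p‖ := rfl
        _ ≤ (i.factorial : ℝ) * Cψ * D^i := h1
        _ ≤ B := by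
            rw [hBdef]
            apply mul_le_mul
            · apply mul_le_mul _ le_rfl hCψ0' (by positivity)
              exact_mod_cast Nat.factorial_le hi
            · exact pow_le_pow_right₀ hD1 hi
            · positivity
            · positivity
    have hnegA : ∀ i ≤ n, ∀ p : ℝ × ℝ, ‖iteratedFDeriv ℝ i (fun p => -(A p)) p‖ ≤ CA' := by
      intro i hi p
      have : (fun p : ℝ × ℝ => -(A p)) = -A := rfl
      rw [this, iteratedFDeriv_neg_apply, norm_neg]
      exact (hCA i hi p).trans (le_max_left _ _)
    intro k hk
    refine ⟨∑ i ∈ Finset.range (k+1), (k.choose i : ℝ) * CA' * B, fun p => ?_⟩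
    have hmul := norm_iteratedFDeriv_mul_le (𝕜 := ℝ) (N := ((n:ℕ) : WithTop ℕ∞))
      (f := fun p : ℝ × ℝ => -(A p)) (g := fun p => ψ (Q p))
      hAc.neg (hψ.comp hQc) p (by exact_mod_cast hk)
    refine hmul.trans ?_
    apply Finset.sum_le_sum
    intro i hi
    rw [Finset.mem_range] at hi
    apply mul_le_mul
    · apply mul_le_mul le_rfl (hnegA i (by omega) p) (norm_nonneg _) (by positivity)
    · exact hcomp (k - i) (by omega) p
    · exact norm_nonneg _
    · positivity
  · -- off-diagonal
    intro s t hst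
    have hstne : s - t ≠ 0 := sub_ne_zero.mpr hst
    have hQeq : Q (s, t) * (s - t) = f s - f t := by
      have e1 : (fun u : ℝ => (1:ℝ) * deriv f (u * s + (1 - u) * t))
          = fun u : ℝ => deriv f ((s - t) * u + t) := by
        funext u; rw [one_mul, show u * s + (1 - u) * t = (s - t) * u + t by ring]
      have e2 : Q (s, t) = (s - t)⁻¹ • ∫ x in t..s, deriv f x := by
        rw [hQdef]
        show (∫ u in (0:ℝ)..1, (1:ℝ) * deriv f (u * s + (1 - u) * t)) = _
        rw [show (∫ u in (0:ℝ)..1, (1:ℝ) * deriv f (u * s + (1 - u) * t))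
            = ∫ u in (0:ℝ)..1, deriv f ((s - t) * u + t) from by rw [e1]]
        rw [intervalIntegral.integral_comp_mul_add (deriv f) hstne t]
        norm_num
      rw [e2, intervalIntegral.integral_deriv_eq_sub (fun x _ => hfd x)
        (hd1cont.intervalIntegrable _ _)]
      field_simp
      rw [smul_eq_mul, one_div, ← mul_assoc, mul_inv_cancel₀ hstne, one_mul]
    have hIBP : (∫ x in t..s, (s - x) * deriv (deriv f) x)
        = f s - f t - (s - t) * deriv f t := by
      have h1 := intervalIntegral.integral_mul_deriv_eq_deriv_mul (a := t) (b := s)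
        (u := fun x => s - x) (v := deriv f) (u' := fun _ => (-1 : ℝ))
        (v' := deriv (deriv f))
        (fun x _ => (hasDerivAt_id x).const_sub s)
        (fun x _ => (hd1d x).hasDerivAt)
        (continuous_const.intervalIntegrable _ _)
        (hd2cont.intervalIntegrable _ _)
      have h2 : (∫ x in t..s, (-1 : ℝ) * deriv f x) = -(f s - f t) := by
        rw [show (fun x => (-1 : ℝ) * deriv f x) = fun x => -(deriv f x) from by
          funext x; ring]
        rw [intervalIntegral.integral_neg, intervalIntegral.integral_deriv_eq_sub
          (fun x _ => hfd x) (hd1cont.intervalIntegrable _ _)]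
      rw [h1, h2]; ring
    have hAeq : A (s, t) * (s - t)^2 = f s - f t - (s - t) * deriv f t := by
      have e1 : (fun u : ℝ => (1 - u) * deriv (deriv f) (u * s + (1 - u) * t))
          = fun u : ℝ => ((s - ((s - t) * u + t)) / (s - t) * deriv (deriv f) ((s - t) * u + t)) := by
        funext u
        rw [show u * s + (1 - u) * t = (s - t) * u + t by ring]
        congr 1
        field_simp
        ring
      have e2 : A (s, t) = (s - t)⁻¹ • ∫ x in t..s, (s - x) / (s - t) * deriv (deriv f) x := by
        rw [hAdef]
        show (∫ u in (0:ℝ)..1, (1 - u) * deriv (deriv f) (u * s + (1 - u) * t)) = _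
        rw [show (∫ u in (0:ℝ)..1, (1 - u) * deriv (deriv f) (u * s + (1 - u) * t))
            = ∫ u in (0:ℝ)..1, (s - ((s - t) * u + t)) / (s - t) * deriv (deriv f) ((s - t) * u + t)
            from by rw [e1]]
        rw [intervalIntegral.integral_comp_mul_add
          (fun x => (s - x) / (s - t) * deriv (deriv f) x) hstne t]
        norm_num
      have e3 : (∫ x in t..s, (s - x) / (s - t) * deriv (deriv f) x)
          = (s - t)⁻¹ * ∫ x in t..s, (s - x) * deriv (deriv f) x := by
        rw [← intervalIntegral.integral_const_mul]
        congr 1; funext x; field_simp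
      rw [e2, e3, hIBP, smul_eq_mul]
      field_simp
    have hden : ((s-t)^2 + (f s - f t)^2) = (s-t)^2 * (1 + Q (s,t)^2) := by
      rw [← hQeq]; ring
    have hnum : (s-t) * deriv f t + f t - f s = -(A (s,t) * (s-t)^2) := by
      rw [hAeq]; ring
    show -(A (s, t)) * ψ (Q (s, t)) = _
    rw [hψdef, hnum, hden]
    have h1Q : 1 + Q (s, t)^2 ≠ 0 := by positivity
    field_simp
  · -- diagonal
    intro s
    have hAss : A (s, s) = deriv (deriv f) s / 2 := by
      rw [hAdef]
      show (∫ u in (0:ℝ)..1, (1 - u) * deriv (deriv f) (u * s + (1 - u) * s)) = _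
      rw [show (fun u : ℝ => (1 - u) * deriv (deriv f) (u * s + (1 - u) * s))
          = fun u : ℝ => (1 - u) * deriv (deriv f) s from by
        funext u; rw [show u * s + (1 - u) * s = s by ring]]
      rw [intervalIntegral.integral_mul_const (deriv (deriv f) s) (fun u : ℝ => 1 - u)]
      have hhalf : (∫ u in (0:ℝ)..1, (1 - u)) = 1/2 := by
        rw [intervalIntegral.integral_comp_sub_left (fun x : ℝ => x) 1]
        norm_num [integral_id]
      rw [hhalf]
      ring
    have hQss : Q (s, s) = deriv f s := by
      rw [hQdef]
      show (∫ u in (0:ℝ)..1, (1:ℝ) * deriv f (u * s + (1 - u) * s)) = _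
      rw [show (fun u : ℝ => (1:ℝ) * deriv f (u * s + (1 - u) * s))
          = fun _ : ℝ => deriv f s from by
        funext u; rw [one_mul, show u * s + (1 - u) * s = s by ring]]
      simp
    show -(A (s, s)) * ψ (Q (s, s)) = _
    rw [hAss, hQss, hψdef]
    have h1Q : 1 + (deriv f s)^2 ≠ 0 := by positivity
    field_simp
end

section
/- Let f ∈ BC^{n+2}(ℝ), and for j,k ∈ {1,2} set x(s) = (s, f(s)), r(s,t) = |x(s) − x(t)|, and ζ_{jk}(s,t) = (x_j(s) − x_j(t))(x_k(s) − x_k(t)) / r(s,t)² for s ≠ t. Then ζ_{jk} extends to a function in BC^n(ℝ²) with diagonal values ζ₁₁(s,s) = 1/(1+f'(s)²), ζ₁₂(s,s) = ζ₂₁(s,s) = f'(s)/(1+f'(s)²), ζ₂₂(s,s) = f'(s)²/(1+f'(s)²). -/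
open MeasureTheory Set
set_option maxHeartbeats 1000000
set_option synthInstance.maxHeartbeats 400000

section ZetaAux
universe u


noncomputable def zmu : Measure ℝ := volume.restrict (Set.Icc (0:ℝ) 1)

instance : IsFiniteMeasure zmu := by
  constructor
  rw [zmu, Measure.restrict_apply_univ, Real.volume_Icc]
  norm_num

lemma zmu_univ : (zmu Set.univ).toReal = 1 := by
  rw [zmu, Measure.restrict_apply_univ, Real.volume_Icc]
  norm_num

lemma zmu_ae_mem : ∀ᵐ u ∂zmu, u ∈ Set.Icc (0:ℝ) 1 := by
  rw [zmu]; exact ae_restrict_mem measurableSet_Icc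

noncomputable def zA (u : ℝ) : (ℝ × ℝ) →L[ℝ] ℝ :=
  u • (ContinuousLinearMap.fst ℝ ℝ ℝ) + (1 - u) • (ContinuousLinearMap.snd ℝ ℝ ℝ)

lemma zA_apply (u : ℝ) (x : ℝ × ℝ) : zA u x = u * x.1 + (1-u) * x.2 := by
  simp [zA, smul_eq_mul]

lemma zA_cont : Continuous zA := by
  unfold zA
  exact (continuous_id.smul continuous_const).add
    ((continuous_const.sub continuous_id).smul continuous_const)

lemma zA_cont2 : Continuous (fun p : ℝ × (ℝ × ℝ) => zA p.1 p.2) := by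
  simp only [zA_apply]
  fun_prop

lemma zA_norm {u : ℝ} (hu : u ∈ Set.Icc (0:ℝ) 1) : ‖zA u‖ ≤ 1 := by
  refine ContinuousLinearMap.opNorm_le_bound _ zero_le_one (fun y => ?_)
  rw [zA_apply, one_mul]
  have hu1 : |1-u| = 1-u := abs_of_nonneg (by linarith [hu.2])
  have hu0 : |u| = u := abs_of_nonneg hu.1
  have h1 : |y.1| ≤ ‖y‖ := by rw [← Real.norm_eq_abs]; exact norm_fst_le y
  have h2 : |y.2| ≤ ‖y‖ := by rw [← Real.norm_eq_abs]; exact norm_snd_le y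
  calc |u * y.1 + (1-u) * y.2| ≤ |u * y.1| + |(1-u) * y.2| := abs_add_le _ _
    _ ≤ u * ‖y‖ + (1-u) * ‖y‖ := by
        rw [abs_mul, abs_mul, hu0, hu1]
        have := hu.1; have := hu.2
        have := abs_nonneg y.1
        nlinarith [norm_nonneg y]
    _ = ‖y‖ := by ring

lemma zkey : ∀ (n : ℕ) {F : Type u} [NormedAddCommGroup F] [NormedSpace ℝ F] [CompleteSpace F]
    (φ : ℝ → ℝ) (M : ℝ → F) (B : ℕ → ℝ),
    ContDiff ℝ n φ → Continuous M → (∀ u ∈ Set.Icc (0:ℝ) 1, ‖M u‖ ≤ 1) →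
    (∀ m ≤ n, ∀ y, |iteratedDeriv m φ y| ≤ B m) →
    ContDiff ℝ n (fun x : ℝ×ℝ => ∫ u, φ (zA u x) • M u ∂zmu) ∧
    ∀ m ≤ n, ∀ x : ℝ×ℝ, ‖iteratedFDeriv ℝ m (fun x : ℝ×ℝ => ∫ u, φ (zA u x) • M u ∂zmu) x‖
      ≤ B m := by
  intro n
  induction n with
  | zero =>
    intro F _ _ _ φ M B hφ hM hMb hB
    have hφc : Continuous φ := hφ.continuous
    have hcont : ∀ u : ℝ, Continuous (fun x : ℝ×ℝ => φ (zA u x) • M u) :=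
      fun u => ((hφc.comp ((zA u).continuous)).smul continuous_const)
    have hmeas : ∀ x : ℝ×ℝ, AEStronglyMeasurable (fun u => φ (zA u x) • M u) zmu := by
      intro x
      exact ((hφc.comp (zA_cont2.comp (Continuous.prodMk_left x))).smul hM).aestronglyMeasurable
    have hbd : ∀ x : ℝ×ℝ, ∀ᵐ u ∂zmu, ‖φ (zA u x) • M u‖ ≤ B 0 := by
      intro x
      filter_upwards [zmu_ae_mem] with u hu
      rw [norm_smul, Real.norm_eq_abs]
      have h1 : |φ (zA u x)| ≤ B 0 := by
        have := hB 0 le_rfl (zA u x); rwa [iteratedDeriv_zero] at this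
      calc |φ (zA u x)| * ‖M u‖ ≤ B 0 * 1 :=
            mul_le_mul h1 (hMb u hu) (norm_nonneg _) ((abs_nonneg _).trans h1)
        _ = B 0 := mul_one _
    constructor
    · rw [show ((0:ℕ) : WithTop ℕ∞) = 0 by norm_cast, contDiff_zero]
      exact continuous_of_dominated hmeas hbd (integrable_const _)
        (Filter.Eventually.of_forall (fun u => hcont u))
    · intro m hm x
      interval_cases m
      rw [norm_iteratedFDeriv_zero]
      calc ‖∫ u, φ (zA u x) • M u ∂zmu‖ ≤ B 0 * (zmu Set.univ).toReal :=
            norm_integral_le_of_norm_le_const (hbd x)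
        _ = B 0 := by rw [zmu_univ, mul_one]
  | succ n IH =>
    intro F _ _ _ φ M B hφ hM hMb hB
    have hcast : ((n+1:ℕ) : WithTop ℕ∞) = (n : WithTop ℕ∞) + 1 := by push_cast; ring
    rw [hcast] at hφ
    have hφd : Differentiable ℝ φ := (contDiff_succ_iff_deriv.mp hφ).1
    have hφ' : ContDiff ℝ n (deriv φ) := (contDiff_succ_iff_deriv.mp hφ).2.2
    have hφc : Continuous φ := hφ.continuous
    have hφ'c : Continuous (deriv φ) := hφ'.continuous
    set N : ℝ → ((ℝ×ℝ) →L[ℝ] F) := fun u => (zA u).smulRight (M u) with hNdef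
    have hNc : Continuous N :=
      isBoundedBilinearMap_smulRight.continuous.comp (zA_cont.prodMk hM)
    have hNb : ∀ u ∈ Set.Icc (0:ℝ) 1, ‖N u‖ ≤ 1 := by
      intro u hu
      rw [hNdef]
      dsimp only
      rw [ContinuousLinearMap.norm_smulRight_apply]
      calc ‖zA u‖ * ‖M u‖ ≤ 1*1 :=
            mul_le_mul (zA_norm hu) (hMb u hu) (norm_nonneg _) zero_le_one
        _ = 1 := one_mul _
    have hB' : ∀ m ≤ n, ∀ y, |iteratedDeriv m (deriv φ) y| ≤ B (m+1) := by
      intro m hm y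
      rw [← iteratedDeriv_succ']
      exact hB (m+1) (by omega) y
    obtain ⟨ih1, ih2⟩ := IH (deriv φ) N (fun m => B (m+1)) hφ' hNc hNb hB'
    have hmeas : ∀ x : ℝ×ℝ, AEStronglyMeasurable (fun u => φ (zA u x) • M u) zmu := fun x =>
      ((hφc.comp (zA_cont2.comp (Continuous.prodMk_left x))).smul hM).aestronglyMeasurable
    have hbd0 : ∀ x : ℝ×ℝ, ∀ᵐ u ∂zmu, ‖φ (zA u x) • M u‖ ≤ B 0 := by
      intro x
      filter_upwards [zmu_ae_mem] with u hu
      rw [norm_smul, Real.norm_eq_abs]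
      have h1 : |φ (zA u x)| ≤ B 0 := by
        have := hB 0 (by omega) (zA u x); rwa [iteratedDeriv_zero] at this
      calc |φ (zA u x)| * ‖M u‖ ≤ B 0 * 1 :=
            mul_le_mul h1 (hMb u hu) (norm_nonneg _) ((abs_nonneg _).trans h1)
        _ = B 0 := mul_one _
    have hdiff : ∀ (u : ℝ) (x : ℝ×ℝ), HasFDerivAt (fun x : ℝ×ℝ => φ (zA u x) • M u)
        (deriv φ (zA u x) • N u) x := by
      intro u x
      have h1 : HasFDerivAt (fun x : ℝ×ℝ => φ (zA u x)) (deriv φ (zA u x) • (zA u)) x :=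
        (hφd (zA u x)).hasDerivAt.comp_hasFDerivAt x ((zA u).hasFDerivAt)
      have h2 := h1.smul_const (M u)
      refine h2.congr_fderiv ?_
      refine ContinuousLinearMap.ext fun v => ?_
      simp [hNdef, mul_smul]
    have key : ∀ x₀ : ℝ×ℝ, HasFDerivAt (fun x : ℝ×ℝ => ∫ u, φ (zA u x) • M u ∂zmu)
        (∫ u, deriv φ (zA u x₀) • N u ∂zmu) x₀ := by
      intro x₀
      apply hasFDerivAt_integral_of_dominated_of_fderiv_le
        (F' := fun (x : ℝ×ℝ) (u : ℝ) => deriv φ (zA u x) • N u) (bound := fun _ => B 1)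
        (s := Metric.ball x₀ 1) (Metric.ball_mem_nhds x₀ one_pos) (Filter.Eventually.of_forall hmeas)
        ((integrable_const (B 0)).mono' (hmeas x₀) (hbd0 x₀))
        ((hφ'c.comp (zA_cont2.comp (Continuous.prodMk_left x₀))).smul hNc).aestronglyMeasurable
        ?_ (integrable_const (B 1)) ?_
      · filter_upwards [zmu_ae_mem] with u hu
        intro x _
        refine le_trans (ContinuousLinearMap.opNorm_smul_le _ _) ?_
        rw [Real.norm_eq_abs]
        have h1 : |deriv φ (zA u x)| ≤ B 1 := by
          have := hB 1 (by omega) (zA u x); rwa [iteratedDeriv_one] at this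
        calc |deriv φ (zA u x)| * ‖N u‖ ≤ B 1 * 1 :=
              mul_le_mul h1 (hNb u hu) (norm_nonneg _) ((abs_nonneg _).trans h1)
          _ = B 1 := mul_one _
      · filter_upwards with u
        intro x _
        exact hdiff u x
    have hEq : (fderiv ℝ (fun x : ℝ×ℝ => ∫ u, φ (zA u x) • M u ∂zmu)) =
        fun x => ∫ u, deriv φ (zA u x) • N u ∂zmu := funext fun x => (key x).fderiv
    constructor
    · rw [hcast, contDiff_succ_iff_fderiv]
      refine ⟨fun x => (key x).differentiableAt, ?_, ?_⟩
      · intro h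
        exact absurd h (by exact WithTop.natCast_ne_top n)
      · rw [hEq]; exact ih1
    · intro m hm x
      match m with
      | 0 =>
        rw [norm_iteratedFDeriv_zero]
        calc ‖∫ u, φ (zA u x) • M u ∂zmu‖ ≤ B 0 * (zmu Set.univ).toReal :=
              norm_integral_le_of_norm_le_const (hbd0 x)
          _ = B 0 := by rw [zmu_univ, mul_one]
      | (m+1) =>
        rw [← norm_iteratedFDeriv_fderiv, hEq]
        exact ih2 m (by omega) x

noncomputable def zH : ℝ → ℂ := fun y => ((y:ℂ) + Complex.I)⁻¹

lemma zw_ne (y : ℝ) : ((y:ℂ) + Complex.I) ≠ 0 := by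
  intro h
  have := congrArg Complex.im h
  simp at this

lemma zw_norm (y : ℝ) : 1 ≤ ‖(y:ℂ) + Complex.I‖ := by
  have h := Complex.abs_im_le_norm ((y:ℂ) + Complex.I)
  simp only [Complex.add_im, Complex.ofReal_im, Complex.I_im, zero_add] at h
  simpa using h

lemma zw_hasDeriv (y : ℝ) : HasDerivAt (fun y : ℝ => ((y:ℂ) + Complex.I)) 1 y := by
  simpa using (Complex.ofRealCLM.hasDerivAt (x := y)).add_const Complex.I

lemma zH_smooth (N : WithTop ℕ∞) : ContDiff ℝ N zH := by
  exact ((Complex.ofRealCLM.contDiff.add contDiff_const).inv (fun y => zw_ne y))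

lemma zH_iter : ∀ k : ℕ, ∃ c : ℂ, ∀ y : ℝ,
    iteratedDeriv k zH y = c * ((y:ℂ) + Complex.I) ^ (-(k+1) : ℤ) := by
  intro k
  induction k with
  | zero =>
    refine ⟨1, fun y => ?_⟩
    rw [iteratedDeriv_zero]
    simp [zH, zpow_neg, zpow_one]
  | succ k IH =>
    obtain ⟨c, hc⟩ := IH
    refine ⟨c * (-(k+1) : ℤ), fun y => ?_⟩
    have hfun : iteratedDeriv k zH = fun y : ℝ => c * ((y:ℂ) + Complex.I) ^ (-(k+1) : ℤ) :=
      funext hc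
    have hd : HasDerivAt (fun y : ℝ => ((y:ℂ) + Complex.I) ^ (-(k+1) : ℤ))
        (((-(k+1) : ℤ) : ℂ) * ((y:ℂ) + Complex.I) ^ ((-(k+1) : ℤ) - 1)) y := by
      have h := hasDerivAt_zpow (-(k+1) : ℤ) ((y:ℂ) + Complex.I) (Or.inl (zw_ne y))
      simpa [Function.comp_def] using h.comp y (zw_hasDeriv y)
    rw [iteratedDeriv_succ, hfun, (hd.const_mul c).deriv]
    have hexp : (-(k+1) : ℤ) - 1 = -((k+1)+1 : ℤ) := by ring
    rw [hexp]
    push_cast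
    ring

lemma zH_norm_le_one (y : ℝ) : ‖zH y‖ ≤ 1 := by
  rw [zH]
  rw [norm_inv]
  exact inv_le_one_of_one_le₀ (zw_norm y)

lemma zH_deriv_bound : ∀ k : ℕ, ∃ C, ∀ y : ℝ, ‖iteratedDeriv k zH y‖ ≤ C := by
  intro k
  obtain ⟨c, hc⟩ := zH_iter k
  refine ⟨‖c‖, fun y => ?_⟩
  rw [hc y, norm_mul, norm_zpow]
  have h1 : ‖(y:ℂ) + Complex.I‖ ^ (-(k+1) : ℤ) ≤ 1 :=
    zpow_le_one_of_nonpos₀ (zw_norm y) (by omega)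
  calc ‖c‖ * ‖(y:ℂ) + Complex.I‖ ^ (-(k+1) : ℤ) ≤ ‖c‖ * 1 :=
        mul_le_mul_of_nonneg_left h1 (norm_nonneg c)
    _ = ‖c‖ := mul_one _

lemma exists_bound_upto {α : Type*} (g : ℕ → α → ℝ) (h : ∀ k, ∃ C, ∀ y, g k y ≤ C) (m : ℕ) :
    ∃ C, ∀ i ≤ m, ∀ y, g i y ≤ C := by
  induction m with
  | zero =>
    obtain ⟨C, hC⟩ := h 0
    exact ⟨C, fun i hi y => by interval_cases i; exact hC y⟩
  | succ m IH =>
    obtain ⟨C1, h1⟩ := IH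
    obtain ⟨C2, h2⟩ := h (m+1)
    refine ⟨max C1 C2, fun i hi y => ?_⟩
    rcases Nat.lt_succ_iff_lt_or_eq.mp (Nat.lt_succ_of_le hi) with h' | h'
    · exact le_trans (h1 i (by omega) y) (le_max_left _ _)
    · subst h'; exact le_trans (h2 y) (le_max_right _ _)

lemma zhb (a : ℝ) (L : ℂ →L[ℝ] ℝ) :
    ∀ k : ℕ, ∃ C, ∀ y : ℝ, ‖iteratedFDeriv ℝ k (fun y => a + L (zH y)) y‖ ≤ C := by
  intro k
  match k with
  | 0 =>
    refine ⟨|a| + ‖L‖, fun y => ?_⟩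
    rw [norm_iteratedFDeriv_zero]
    calc ‖a + L (zH y)‖ ≤ ‖a‖ + ‖L (zH y)‖ := norm_add_le _ _
      _ ≤ |a| + ‖L‖ := by
          rw [Real.norm_eq_abs]
          have := L.le_opNorm (zH y)
          have h2 := zH_norm_le_one y
          have h3 := norm_nonneg L
          gcongr
          nlinarith [L.le_opNorm (zH y)]
  | (m+1) =>
    obtain ⟨C, hC⟩ := zH_deriv_bound (m+1)
    refine ⟨‖L‖ * C, fun y => ?_⟩
    have hψ : ContDiff ℝ ((m+1:ℕ) : WithTop ℕ∞) (fun y : ℝ => L (zH y)) :=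
      L.contDiff.comp (zH_smooth _)
    have hsplit : iteratedFDeriv ℝ (m+1) (fun y : ℝ => a + L (zH y)) y =
        iteratedFDeriv ℝ (m+1) (fun _ : ℝ => a) y
          + iteratedFDeriv ℝ (m+1) (fun y : ℝ => L (zH y)) y :=
      iteratedFDeriv_add_apply contDiff_const.contDiffAt hψ.contDiffAt
    rw [hsplit, iteratedFDeriv_const_of_ne (Nat.succ_ne_zero m), Pi.zero_apply, zero_add]
    have hcomp : iteratedFDeriv ℝ (m+1) (⇑L ∘ zH) y =
        L.compContinuousMultilinearMap (iteratedFDeriv ℝ (m+1) zH y) :=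
      ContinuousLinearMap.iteratedFDeriv_comp_left L (zH_smooth ((m+1:ℕ) : WithTop ℕ∞)).contDiffAt le_rfl
    have : (fun y : ℝ => L (zH y)) = ⇑L ∘ zH := rfl
    rw [this, hcomp]
    calc ‖L.compContinuousMultilinearMap (iteratedFDeriv ℝ (m+1) zH y)‖
        ≤ ‖L‖ * ‖iteratedFDeriv ℝ (m+1) zH y‖ :=
          ContinuousLinearMap.norm_compContinuousMultilinearMap_le _ _
      _ ≤ ‖L‖ * C := by
          rw [norm_iteratedFDeriv_eq_norm_iteratedDeriv]
          exact mul_le_mul_of_nonneg_left (hC y) (norm_nonneg L)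

lemma zcomp (n : ℕ) (q : ℝ×ℝ → ℝ) (hq : ContDiff ℝ (n : ℕ) q) (Bq : ℕ → ℝ)
    (hqb : ∀ m ≤ n, ∀ x, ‖iteratedFDeriv ℝ m q x‖ ≤ Bq m) (a : ℝ) (L : ℂ →L[ℝ] ℝ) :
    ContDiff ℝ (n : ℕ) (fun x => a + L (zH (q x))) ∧
    ∀ m ≤ n, ∃ C, ∀ x, ‖iteratedFDeriv ℝ m (fun x => a + L (zH (q x))) x‖ ≤ C := by
  have hh : ContDiff ℝ (n : ℕ) (fun y : ℝ => a + L (zH y)) :=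
    contDiff_const.add (L.contDiff.comp (zH_smooth _))
  constructor
  · exact hh.comp hq
  · intro m hm
    obtain ⟨Ch, hCh⟩ := exists_bound_upto
      (fun i y => ‖iteratedFDeriv ℝ i (fun y : ℝ => a + L (zH y)) y‖) (zhb a L) m
    set D := 1 + ∑ i ∈ Finset.range (m+1), |Bq i| with hD
    have hsum : (0:ℝ) ≤ ∑ i ∈ Finset.range (m+1), |Bq i| :=
      Finset.sum_nonneg (fun i _ => abs_nonneg _)
    have hD1 : 1 ≤ D := by rw [hD]; linarith
    refine ⟨(m.factorial : ℝ) * Ch * D ^ m, fun x => ?_⟩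
    have hcb : ∀ i, i ≤ m → ‖iteratedFDeriv ℝ i (fun y : ℝ => a + L (zH y)) (q x)‖ ≤ Ch :=
      fun i hi => hCh i hi (q x)
    have hdb : ∀ i, 1 ≤ i → i ≤ m → ‖iteratedFDeriv ℝ i q x‖ ≤ D ^ i := by
      intro i h1 h2
      have s1 : ‖iteratedFDeriv ℝ i q x‖ ≤ Bq i := hqb i (le_trans h2 hm) x
      have s2 : Bq i ≤ ∑ j ∈ Finset.range (m+1), |Bq j| :=
        le_trans (le_abs_self _)
          (Finset.single_le_sum (f := fun j => |Bq j|) (fun j _ => abs_nonneg _)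
            (Finset.mem_range.mpr (by omega)))
      have s3 : D ≤ D ^ i := le_self_pow₀ hD1 (by omega)
      calc ‖iteratedFDeriv ℝ i q x‖ ≤ Bq i := s1
        _ ≤ D := by rw [hD]; linarith
        _ ≤ D ^ i := s3
    have := norm_iteratedFDeriv_comp_le (g := fun y : ℝ => a + L (zH y)) (f := q)
      (N := (n : WithTop ℕ∞)) hh hq (Nat.cast_le.mpr hm) x hcb hdb
    simpa [Function.comp_def] using this

lemma zval00 (y : ℝ) : (0:ℝ) + (-Complex.imCLM) (zH y) = 1/(1+y^2) := by
  have h : Complex.normSq ((y:ℂ) + Complex.I) = 1 + y^2 := by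
    simp [Complex.normSq_apply]; ring
  simp [zH, Complex.inv_im, h]
  rw [neg_div, neg_neg, one_div]

lemma zval01 (y : ℝ) : (0:ℝ) + Complex.reCLM (zH y) = y/(1+y^2) := by
  have h : Complex.normSq ((y:ℂ) + Complex.I) = 1 + y^2 := by
    simp [Complex.normSq_apply]; ring
  simp [zH, Complex.inv_re, h]

lemma zval11 (y : ℝ) : (1:ℝ) + Complex.imCLM (zH y) = y^2/(1+y^2) := by
  have h : Complex.normSq ((y:ℂ) + Complex.I) = 1 + y^2 := by
    simp [Complex.normSq_apply]; ring
  have h2 : (1:ℝ) + y^2 ≠ 0 := by positivity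
  simp [zH, Complex.inv_im, h]
  field_simp
  ring

lemma zmu_def : zmu = volume.restrict (Set.Icc (0:ℝ) 1) := rfl

end ZetaAux

/-- coordinates of the surface point x(s) = (s, f(s)) -/
noncomputable def surfCoord (f : ℝ → ℝ) (j : Fin 2) (s : ℝ) : ℝ :=
  if j = 0 then s else f s

/-- ζ_{jk}(s,t) = (x_j(s)−x_j(t))(x_k(s)−x_k(t))/r² extends to BCⁿ(ℝ²). -/
theorem zeta_BCn (n : ℕ) (f : ℝ → ℝ)
    (hf : ContDiff ℝ (n+2 : ℕ) f)
    (hfb : ∀ k ≤ n+2, ∃ C, ∀ x, |iteratedDeriv k f x| ≤ C) :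
    ∀ j k : Fin 2, ∃ g : ℝ × ℝ → ℝ, ContDiff ℝ (n : ℕ) g ∧
      (∀ m ≤ n, ∃ C, ∀ p : ℝ × ℝ, ‖iteratedFDeriv ℝ m g p‖ ≤ C) ∧
      (∀ s t : ℝ, s ≠ t →
        g (s, t) = (surfCoord f j s - surfCoord f j t) * (surfCoord f k s - surfCoord f k t)
          / ((s-t)^2 + (f s - f t)^2)) ∧
      (∀ s : ℝ, g (s, s) =
        if j = 0 ∧ k = 0 then 1 / (1 + (deriv f s)^2)
        else if j = 1 ∧ k = 1 then (deriv f s)^2 / (1 + (deriv f s)^2)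
        else deriv f s / (1 + (deriv f s)^2)) := by
  obtain ⟨B, hB⟩ : ∃ B : ℕ → ℝ, ∀ K, K ≤ n+2 → ∀ x, |iteratedDeriv K f x| ≤ B K := by
    classical
    refine ⟨fun K => if h : ∃ C, ∀ x, |iteratedDeriv K f x| ≤ C then h.choose else 0,
      fun K hK x => ?_⟩
    have h := hfb K hK
    simp only [dif_pos h]
    exact h.choose_spec x
  have hfd : Differentiable ℝ f := hf.differentiable (by norm_cast)
  have hf2 : ((n+2:ℕ) : WithTop ℕ∞) = ((n+1:ℕ) : WithTop ℕ∞) + 1 := by push_cast; ring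
  have hf' : ContDiff ℝ ((n+1:ℕ) : WithTop ℕ∞) (deriv f) := by
    rw [hf2] at hf
    exact (contDiff_succ_iff_deriv.mp hf).2.2
  have hdfc : Continuous (deriv f) := hf'.continuous
  obtain ⟨hqc, hqb⟩ := zkey n (deriv f) (fun _ => (1:ℝ)) (fun m => B (m+1))
    (hf'.of_le (by norm_cast; omega)) continuous_const (fun u _ => by simp)
    (fun m hm y => by rw [← iteratedDeriv_succ']; exact hB (m+1) (by omega) y)
  set q : ℝ×ℝ → ℝ := fun x => ∫ u, deriv f (zA u x) • (1:ℝ) ∂zmu with hqdef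
  have qmul : ∀ s t : ℝ, q (s, t) * (s - t) = f s - f t := by
    intro s t
    show (∫ u, deriv f (zA u (s,t)) • (1:ℝ) ∂zmu) * (s - t) = f s - f t
    have hint : (∫ u, deriv f (zA u (s,t)) • (1:ℝ) ∂zmu)
        = ∫ u in (0:ℝ)..1, deriv f (u*s+(1-u)*t) := by
      rw [intervalIntegral.integral_of_le zero_le_one, ← integral_Icc_eq_integral_Ioc, zmu_def]
      congr 1
      funext u
      rw [zA_apply, smul_eq_mul, mul_one]
    have key : (s-t) * (∫ u in (0:ℝ)..1, deriv f (u*s+(1-u)*t)) = f s - f t := by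
      have hd : ∀ u ∈ Set.uIcc (0:ℝ) 1,
          HasDerivAt (fun u : ℝ => f (u*s+(1-u)*t)) ((s-t) * deriv f (u*s+(1-u)*t)) u := by
        intro u _
        have hlin : HasDerivAt (fun u : ℝ => u*s+(1-u)*t) (s-t) u := by
          have h1 := ((hasDerivAt_id u).mul_const s).add
            (((hasDerivAt_const u (1:ℝ)).sub (hasDerivAt_id u)).mul_const t)
          exact h1.congr_deriv (by ring)
        have h2 := ((hfd (u*s+(1-u)*t)).hasDerivAt).comp u hlin
        exact h2.congr_deriv (by ring)
      have hcont : Continuous fun u : ℝ => (s-t) * deriv f (u*s+(1-u)*t) :=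
        continuous_const.mul (hdfc.comp (by fun_prop))
      have h3 := intervalIntegral.integral_eq_sub_of_hasDerivAt hd (hcont.intervalIntegrable 0 1)
      norm_num at h3
      exact h3
    rw [hint, mul_comm]
    exact key
  have qdiag : ∀ s : ℝ, q (s, s) = deriv f s := by
    intro s
    show (∫ u, deriv f (zA u (s,s)) • (1:ℝ) ∂zmu) = deriv f s
    have h1 : (fun u => deriv f (zA u (s,s)) • (1:ℝ)) = fun _ => deriv f s := by
      funext u
      rw [zA_apply, smul_eq_mul, mul_one]
      congr 1
      ring
    rw [h1, integral_const, measureReal_def, zmu_univ, smul_eq_mul, one_mul]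
  intro j k
  fin_cases j <;> fin_cases k
  · -- j = 0, k = 0
    obtain ⟨hg1, hg2⟩ := zcomp n q hqc (fun m => B (m+1)) hqb 0 (-Complex.imCLM)
    refine ⟨_, hg1, hg2, ?_, ?_⟩
    · intro s t hst
      dsimp only
      rw [zval00]
      have hQ := qmul s t
      set Q := q (s,t) with hQdef
      have hst' : s - t ≠ 0 := sub_ne_zero.mpr hst
      simp only [surfCoord, Fin.zero_eta, if_pos rfl, ↓reduceIte]
      rw [← hQ]
      have h1 : (1:ℝ) + Q^2 ≠ 0 := by positivity
      have h2 : (s-t)^2 + (Q*(s-t))^2 ≠ 0 := by positivity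
      field_simp
    · intro s
      dsimp only
      rw [qdiag s, zval00]
      norm_num
  · -- j = 0, k = 1
    obtain ⟨hg1, hg2⟩ := zcomp n q hqc (fun m => B (m+1)) hqb 0 Complex.reCLM
    refine ⟨_, hg1, hg2, ?_, ?_⟩
    · intro s t hst
      dsimp only
      rw [zval01]
      have hQ := qmul s t
      set Q := q (s,t) with hQdef
      have hst' : s - t ≠ 0 := sub_ne_zero.mpr hst
      simp only [surfCoord]
      norm_num
      rw [← hQ]
      have h1 : (1:ℝ) + Q^2 ≠ 0 := by positivity
      have h2 : (s-t)^2 + (Q*(s-t))^2 ≠ 0 := by positivity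
      field_simp
    · intro s
      dsimp only
      rw [qdiag s, zval01]
      norm_num
  · -- j = 1, k = 0
    obtain ⟨hg1, hg2⟩ := zcomp n q hqc (fun m => B (m+1)) hqb 0 Complex.reCLM
    refine ⟨_, hg1, hg2, ?_, ?_⟩
    · intro s t hst
      dsimp only
      rw [zval01]
      have hQ := qmul s t
      set Q := q (s,t) with hQdef
      have hst' : s - t ≠ 0 := sub_ne_zero.mpr hst
      simp only [surfCoord]
      norm_num
      rw [← hQ]
      have h1 : (1:ℝ) + Q^2 ≠ 0 := by positivity
      have h2 : (s-t)^2 + (Q*(s-t))^2 ≠ 0 := by positivity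
      field_simp
    · intro s
      dsimp only
      rw [qdiag s, zval01]
      norm_num
  · -- j = 1, k = 1
    obtain ⟨hg1, hg2⟩ := zcomp n q hqc (fun m => B (m+1)) hqb 1 Complex.imCLM
    refine ⟨_, hg1, hg2, ?_, ?_⟩
    · intro s t hst
      dsimp only
      rw [zval11]
      have hQ := qmul s t
      set Q := q (s,t) with hQdef
      have hst' : s - t ≠ 0 := sub_ne_zero.mpr hst
      simp only [surfCoord]
      norm_num
      rw [← hQ]
      have h1 : (1:ℝ) + Q^2 ≠ 0 := by positivity
      have h2 : (s-t)^2 + (Q*(s-t))^2 ≠ 0 := by positivity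
      field_simp
    · intro s
      dsimp only
      rw [qdiag s, zval11]
      norm_num
end
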